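/- arXiv:1707.07302 — 6 statements merged into one kernel-verified Lean document; each statement's English description precedes it below -/
import Mathlib

section
/- Let K be a field and let I, J ⊂ K[x_1,…,x_n] be equigenerated graded ideals. Then μ(IJ) ≥ μ(I) + μ(J) − 1. In particular, if neither I nor J is a principal ideal, then μ(IJ) > max{μ(I), μ(J)}. -/
/-!
If `I` is generated by forms of degree `d` spanning the `K`-space `V`, then `μ(I) = dim V`: a basis
of `V` generates `I`, and the degree-`d` components of any generating set span `V`. Since `IJ` is
generated by `V * W` in degree `d + e`, the claim reduces to `dim (V * W) ≥ dim V + dim W - 1`.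
Fix a monomial order. The dimension of a finite-dimensional space of polynomials is the number of
leading monomials of its nonzero elements, and leading monomials add under multiplication, so the
leading monomials of `V * W` contain the sumset of those of `V` and `W`; the Cauchy–Davenport
inequality for finite subsets of a linearly ordered cancellative monoid finishes the proof.
-/

open MvPolynomial

/-- The minimal number of generators of an ideal. -/
noncomputable def mu {R : Type*} [CommRing R] (I : Ideal R) : ℕ :=
  sInf {m : ℕ | ∃ s : Finset R, s.card = m ∧ Ideal.span (s : Set R) = I}

/-- An equigenerated graded ideal: generated by nonzero homogeneous polynomials,
all of the same degree. -/
def IsEquigenerated {K : Type*} [Field K] {n : ℕ} (I : Ideal (MvPolynomial (Fin n) K)) : Prop :=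
  ∃ (d : ℕ) (S : Set (MvPolynomial (Fin n) K)), S.Nonempty ∧
    (∀ f ∈ S, f ≠ 0 ∧ f.IsHomogeneous d) ∧ I = Ideal.span S

open scoped Pointwise

universe u

instance Submodule.finite_mul {R A : Type*} [CommSemiring R] [Semiring A] [Algebra R A]
    (M N : Submodule R A) [Module.Finite R M] [Module.Finite R N] : Module.Finite R ↥(M * N) :=
  Module.Finite.iff_fg.2 ((Module.Finite.iff_fg.1 ‹_›).mul (Module.Finite.iff_fg.1 ‹_›))

theorem MonomialOrder.nonempty (σ : Type u) : Nonempty (MonomialOrder.{u, u} σ) := by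
  classical
  -- `lex` needs `WellFoundedGT σ`, so order `σ` by the reverse of a well-order.
  let _ : LinearOrder σ := linearOrderOfSTO (Function.swap WellOrderingRel)
  have : WellFoundedGT σ := ⟨WellOrderingRel.isWellOrder.wf⟩
  exact ⟨MonomialOrder.lex⟩

namespace MonomialOrder

variable {σ K : Type*} [Field K] (m : MonomialOrder σ)

-- Kept in `m.syn`, where the monomial order lives.
def leadingDegrees (V : Submodule K (MvPolynomial σ K)) : Set m.syn :=
  {a | ∃ v ∈ V, v ≠ 0 ∧ m.toSyn (m.degree v) = a}

theorem linearIndependent_of_injective_degree {ι : Type*} {f : ι → MvPolynomial σ K}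
    (hf : ∀ i, f i ≠ 0) (hinj : Function.Injective (m.degree ∘ f)) : LinearIndependent K f := by
  classical
  rw [linearIndependent_iff']
  intro s g hsum i hi
  by_contra hgi
  obtain ⟨i₀, hi₀, hmax⟩ := (s.filter (g · ≠ 0)).exists_max_image (m.toSyn ∘ m.degree ∘ f)
    ⟨i, Finset.mem_filter.2 ⟨hi, hgi⟩⟩
  rw [Finset.mem_filter] at hi₀
  -- only the term of largest degree contributes to the coefficient at that degree
  have hcoeff := congrArg (coeff (m.degree (f i₀))) hsum
  rw [coeff_sum, Finset.sum_eq_single i₀, coeff_smul, smul_eq_mul, coeff_zero] at hcoeff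
  · exact mul_ne_zero hi₀.2 (m.coeff_degree_ne_zero_iff.2 (hf i₀)) hcoeff
  · intro j hj hji₀
    by_cases hgj : g j = 0
    · rw [hgj, zero_smul, coeff_zero]
    rw [coeff_smul, m.coeff_eq_zero_of_lt, smul_zero]
    exact (hmax j (Finset.mem_filter.2 ⟨hj, hgj⟩)).lt_of_ne
      fun h => hji₀ (hinj (m.toSyn.injective h))
  · exact fun h => absurd hi₀.1 h

theorem leadingDegrees_nonempty {V : Submodule K (MvPolynomial σ K)} (hV : V ≠ ⊥) :
    (m.leadingDegrees V).Nonempty :=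
  let ⟨v, hv, hv0⟩ := Submodule.exists_mem_ne_zero_of_ne_bot hV
  ⟨_, v, hv, hv0, rfl⟩

variable (V W : Submodule K (MvPolynomial σ K))

theorem exists_linearIndependent_of_leadingDegrees :
    ∃ v : m.leadingDegrees V → V, LinearIndependent K v := by
  choose v hvV hv0 hvdeg using fun a : m.leadingDegrees V => a.2
  refine ⟨fun a => ⟨v a, hvV a⟩, LinearIndependent.of_comp V.subtype ?_⟩
  refine m.linearIndependent_of_injective_degree hv0 fun a b hab => Subtype.ext ?_
  rw [← hvdeg a, ← hvdeg b]
  exact congrArg m.toSyn hab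

theorem leadingDegrees_add_subset :
    m.leadingDegrees V + m.leadingDegrees W ⊆ m.leadingDegrees (V * W) := by
  rintro _ ⟨_, ⟨v, hv, hv0, rfl⟩, _, ⟨w, hw, hw0, rfl⟩, rfl⟩
  exact ⟨v * w, Submodule.mul_mem_mul hv hw, mul_ne_zero hv0 hw0, by
    rw [m.degree_mul hv0 hw0, map_add]⟩

variable [FiniteDimensional K V]

theorem finite_leadingDegrees : (m.leadingDegrees V).Finite :=
  let ⟨_, hv⟩ := m.exists_linearIndependent_of_leadingDegrees V
  Set.finite_coe_iff.1 hv.finite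

theorem finrank_eq_ncard_leadingDegrees : Module.finrank K V = (m.leadingDegrees V).ncard := by
  classical
  have := (m.finite_leadingDegrees V).fintype
  apply le_antisymm
  · -- a nonzero element has a nonzero coefficient at its own leading monomial
    let F : V →ₗ[K] m.leadingDegrees V → K :=
      LinearMap.pi fun a => (lcoeff K (m.toSyn.symm a)).comp V.subtype
    have hF : Function.Injective F := by
      rw [← LinearMap.ker_eq_bot, Submodule.eq_bot_iff]
      rintro ⟨v, hvV⟩ hv
      rw [Submodule.mk_eq_zero]
      by_contra hv0
      have hcoeff := congrFun hv ⟨_, v, hvV, hv0, rfl⟩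
      simp only [F, LinearMap.pi_apply, LinearMap.comp_apply, Submodule.subtype_apply,
        lcoeff_apply, AddEquiv.symm_apply_apply, Pi.zero_apply] at hcoeff
      exact m.coeff_degree_ne_zero_iff.2 hv0 hcoeff
    calc Module.finrank K V ≤ Module.finrank K (m.leadingDegrees V → K) :=
          LinearMap.finrank_le_finrank_of_injective hF
      _ = (m.leadingDegrees V).ncard := by
        rw [Module.finrank_fintype_fun_eq_card, ← Nat.card_eq_fintype_card, Nat.card_coe_set_eq]
  · obtain ⟨v, hv⟩ := m.exists_linearIndependent_of_leadingDegrees V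
    rw [← Nat.card_coe_set_eq, Nat.card_eq_fintype_card]
    exact hv.fintype_card_le_finrank

theorem ncard_leadingDegrees_add_sub_one_le [FiniteDimensional K W]
    (hV : V ≠ ⊥) (hW : W ≠ ⊥) :
    (m.leadingDegrees V).ncard + (m.leadingDegrees W).ncard - 1 ≤
      (m.leadingDegrees (V * W)).ncard := by
  classical
  have hA := m.finite_leadingDegrees V
  have hB := m.finite_leadingDegrees W
  have hC := m.finite_leadingDegrees (V * W)
  rw [Set.ncard_eq_toFinset_card _ hA, Set.ncard_eq_toFinset_card _ hB,
    Set.ncard_eq_toFinset_card _ hC]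
  calc hA.toFinset.card + hB.toFinset.card - 1 ≤ (hA.toFinset + hB.toFinset).card :=
        cauchy_davenport_add_of_linearOrder_isCancelAdd
          (hA.toFinset_nonempty.2 (m.leadingDegrees_nonempty hV))
          (hB.toFinset_nonempty.2 (m.leadingDegrees_nonempty hW))
    _ ≤ hC.toFinset.card := Finset.card_le_card <| by
        simpa [← Finset.coe_subset] using m.leadingDegrees_add_subset V W

end MonomialOrder

theorem MvPolynomial.finrank_add_finrank_sub_one_le_finrank_mul {σ : Type u} {K : Type*} [Field K]
    {V W : Submodule K (MvPolynomial σ K)} [FiniteDimensional K V] [FiniteDimensional K W]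
    (hV : V ≠ ⊥) (hW : W ≠ ⊥) :
    Module.finrank K V + Module.finrank K W - 1 ≤ Module.finrank K ↥(V * W) := by
  obtain ⟨m⟩ := MonomialOrder.nonempty σ
  simp only [m.finrank_eq_ncard_leadingDegrees]
  exact m.ncard_leadingDegrees_add_sub_one_le V W hV hW

theorem mu_span_le_finrank {K R : Type*} [Field K] [CommRing R] [Algebra K R] (G : Set R)
    [FiniteDimensional K (Submodule.span K G)] :
    mu (Ideal.span G) ≤ Module.finrank K (Submodule.span K G) := by
  classical
  obtain ⟨b, -, hb, hli⟩ := exists_linearIndependent K G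
  obtain ⟨w, hw⟩ := Module.Finite.iff_fg.1 ‹FiniteDimensional K (Submodule.span K G)›
  have : Fintype b := (Set.finite_coe_iff.1 <| hli.finite_of_le_span_finite _ w <| by
    rw [Subtype.range_coe, hw, ← hb]; exact Submodule.subset_span).fintype
  refine Nat.sInf_le ⟨b.toFinset, ?_, ?_⟩
  · rw [← hb, finrank_span_set_eq_card hli]
  · change Submodule.span R (b.toFinset : Set R) = Submodule.span R G
    rw [Set.coe_toFinset, ← Submodule.span_span_of_tower K, hb, Submodule.span_span_of_tower]

theorem exists_card_eq_mu {R : Type*} [CommRing R] [IsNoetherianRing R] (I : Ideal R) :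
    ∃ s : Finset R, s.card = mu I ∧ Ideal.span (s : Set R) = I := by
  obtain ⟨s, hs⟩ := IsNoetherian.noetherian I
  exact Nat.sInf_mem (s := {m | ∃ s : Finset R, s.card = m ∧ Ideal.span (s : Set R) = I})
    ⟨s.card, s, rfl, hs⟩

theorem one_lt_mu_of_not_isPrincipal {R : Type*} [CommRing R] [IsNoetherianRing R] {I : Ideal R}
    (hI : ¬ I.IsPrincipal) : 1 < mu I := by
  obtain ⟨s, hs, rfl⟩ := exists_card_eq_mu I
  by_contra! h
  obtain ⟨x, hx⟩ := Finset.card_le_one_iff_subset_singleton.1 (hs ▸ h)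
  obtain rfl | rfl := Finset.subset_singleton_iff.1 hx
  · simp only [Finset.coe_empty, Ideal.span_empty] at hI
    exact hI bot_isPrincipal
  · exact hI ⟨x, by simp⟩

namespace MvPolynomial

section CommSemiring

variable {σ R : Type*} [CommSemiring R]

attribute [local instance] MvPolynomial.gradedAlgebra in
theorem homogeneousComponent_mul_of_isHomogeneous {g : MvPolynomial σ R} {D : ℕ}
    (hg : g.IsHomogeneous D) (r : MvPolynomial σ R) :
    homogeneousComponent D (r * g) = C (constantCoeff r) * g := by
  have := DirectSum.coe_decompose_mul_of_right_mem_of_le (homogeneousSubmodule σ R) (a := r)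
    ((mem_homogeneousSubmodule D g).2 hg) le_rfl
  rwa [Nat.sub_self, ← DirectSum.Decomposition.decompose'_eq, decomposition.decompose'_apply,
    decomposition.decompose'_apply, homogeneousComponent_zero] at this

theorem homogeneousComponent_mul_of_mem_span {G : Set (MvPolynomial σ R)} {D : ℕ}
    (hG : ∀ g ∈ G, g.IsHomogeneous D) {t : MvPolynomial σ R} (ht : t ∈ Ideal.span G)
    (r : MvPolynomial σ R) :
    homogeneousComponent D (r * t) = C (constantCoeff r) * homogeneousComponent D t := by
  induction ht using Submodule.span_induction generalizing r with
  | mem g hg =>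
    rw [homogeneousComponent_mul_of_isHomogeneous (hG g hg), homogeneousComponent_eq_self (hG g hg)]
  | zero => simp
  | add x y _ _ hx hy => rw [mul_add, map_add, map_add, hx, hy, mul_add]
  | smul s t _ ht => rw [smul_eq_mul, ← mul_assoc, ht, ht, ← mul_assoc, ← map_mul, ← map_mul]

end CommSemiring

variable {σ K : Type*} [Field K]

theorem finrank_span_le_card_of_ideal_span_eq {G : Set (MvPolynomial σ K)} {D : ℕ}
    (hG : ∀ g ∈ G, g.IsHomogeneous D) {T : Finset (MvPolynomial σ K)}
    (hT : Ideal.span (T : Set (MvPolynomial σ K)) = Ideal.span G) :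
    Module.finrank K (Submodule.span K G) ≤ T.card := by
  classical
  set T' := T.image (homogeneousComponent D)
  have hle : Submodule.span K G ≤ Submodule.span K (T' : Set (MvPolynomial σ K)) := by
    refine Submodule.span_le.2 fun g hg => ?_
    have hgT : g ∈ Ideal.span (T : Set (MvPolynomial σ K)) := hT ▸ Ideal.subset_span hg
    obtain ⟨f, -, hf⟩ := Submodule.mem_span_finset.1 hgT
    rw [SetLike.mem_coe, ← homogeneousComponent_eq_self (hG g hg), ← hf, map_sum]
    refine Submodule.sum_mem _ fun t ht => ?_
    rw [smul_eq_mul, homogeneousComponent_mul_of_mem_span hG (hT ▸ Ideal.subset_span ht),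
      ← smul_eq_C_mul]
    exact Submodule.smul_mem _ _ (Submodule.subset_span (Finset.mem_image_of_mem _ ht))
  calc Module.finrank K (Submodule.span K G)
      ≤ Module.finrank K (Submodule.span K (T' : Set (MvPolynomial σ K))) :=
        Submodule.finrank_mono hle
    _ ≤ T'.card := finrank_span_finset_le_card _
    _ ≤ T.card := Finset.card_image_le

theorem finiteDimensional_span_of_isHomogeneous [Finite σ] {G : Set (MvPolynomial σ K)} {D : ℕ}
    (hG : ∀ g ∈ G, g.IsHomogeneous D) : FiniteDimensional K (Submodule.span K G) :=
  have : FiniteDimensional K (homogeneousSubmodule σ K D) :=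
    Module.Finite.iff_fg.2 (homogeneousSubmodule_fg σ K D)
  Submodule.finiteDimensional_of_le
    (Submodule.span_le.2 fun g hg => (mem_homogeneousSubmodule D g).2 (hG g hg))

theorem mu_span_eq_finrank [Finite σ] {G : Set (MvPolynomial σ K)} {D : ℕ}
    (hG : ∀ g ∈ G, g.IsHomogeneous D) :
    mu (Ideal.span G) = Module.finrank K (Submodule.span K G) := by
  have := finiteDimensional_span_of_isHomogeneous hG
  refine (mu_span_le_finrank G).antisymm ?_
  obtain ⟨T, hT, hspan⟩ := exists_card_eq_mu (Ideal.span G)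
  exact hT ▸ finrank_span_le_card_of_ideal_span_eq hG hspan

end MvPolynomial

/-- Theorem 1.7: if `I, J ⊂ K[x₁,…,xₙ]` are equigenerated graded ideals, then
`μ(IJ) ≥ μ(I) + μ(J) - 1`; in particular `μ(IJ) > max{μ(I), μ(J)}` if neither `I`
nor `J` is principal. -/
theorem numGen_mul_ge {K : Type*} [Field K] {n : ℕ}
    (I J : Ideal (MvPolynomial (Fin n) K))
    (hI : IsEquigenerated I) (hJ : IsEquigenerated J) :
    mu I + mu J - 1 ≤ mu (I * J) ∧
    (¬ I.IsPrincipal → ¬ J.IsPrincipal → max (mu I) (mu J) < mu (I * J)) := by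
  obtain ⟨d, S, ⟨f, hfS⟩, hS, rfl⟩ := hI
  obtain ⟨e, T, ⟨g, hgT⟩, hT, rfl⟩ := hJ
  have hSd : ∀ f ∈ S, f.IsHomogeneous d := fun f hf => (hS f hf).2
  have hTe : ∀ g ∈ T, g.IsHomogeneous e := fun g hg => (hT g hg).2
  have hST : ∀ h ∈ S * T, h.IsHomogeneous (d + e) := by
    rintro _ ⟨f, hf, g, hg, rfl⟩
    exact (hSd f hf).mul (hTe g hg)
  have := finiteDimensional_span_of_isHomogeneous hSd
  have := finiteDimensional_span_of_isHomogeneous hTe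
  have hmul : mu (Ideal.span S) + mu (Ideal.span T) - 1 ≤ mu (Ideal.span S * Ideal.span T) := by
    rw [Ideal.span_mul_span', mu_span_eq_finrank hSd, mu_span_eq_finrank hTe,
      mu_span_eq_finrank hST, ← Submodule.span_mul_span]
    exact finrank_add_finrank_sub_one_le_finrank_mul
      (fun h => (hS f hfS).1 (Submodule.span_eq_bot.1 h f hfS))
      (fun h => (hT g hgT).1 (Submodule.span_eq_bot.1 h g hgT))
  refine ⟨hmul, fun hPI hPJ => ?_⟩
  have := one_lt_mu_of_not_isPrincipal hPI
  have := one_lt_mu_of_not_isPrincipal hPJ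
  rw [max_lt_iff]
  omega
end

section
/- Let K be a field, let I ⊂ K[x_1,…,x_n] be an equigenerated monomial ideal, let S(I) ⊂ ℤ^n be the set of exponent vectors of the minimal monomial generators of I, and let d be the dimension of the affine hull of S(I) in ℚ^n. Then μ(I^2) ≥ (d+1)·μ(I) − (d+1 choose 2). -/
open MvPolynomial

/-- An equigenerated monomial ideal: generated by monomials all of the same total degree. -/
def IsEquigenMonomialIdeal {K : Type*} [Field K] {n : ℕ}
    (I : Ideal (MvPolynomial (Fin n) K)) : Prop :=
  ∃ (d : ℕ) (S : Set (Fin n →₀ ℕ)), S.Nonempty ∧ (∀ v ∈ S, (∑ i, v i) = d) ∧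
    I = Ideal.span ((fun v => monomial v (1 : K)) '' S)

/-- The set of exponent vectors of the minimal monomial generators of a monomial ideal. -/
def minMonGens {K : Type*} [Field K] {n : ℕ} (I : Ideal (MvPolynomial (Fin n) K)) :
    Set (Fin n →₀ ℕ) :=
  {v | monomial v (1 : K) ∈ I ∧ ∀ w : Fin n →₀ ℕ, w ≤ v → w ≠ v → monomial w (1 : K) ∉ I}

/-!
Order `ℚⁿ` lexicographically, let `v` be the largest point of `A` and `B = A \ {v}`. The set `C` of
`a ∈ A` with `v + a ∉ B + B` contains `v`, and every `a ∈ A \ C` satisfies `v + a = b + b'` with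
`b, b' ∈ B` both larger than `a`; by downward induction `C` affinely spans `A`, so `|C| ≥ d + 1`.
Since `B + B` and `v + C` are disjoint in `A + A`, induction on `|A|` gives Freiman's bound
`|A + A| ≥ (d + 1)|A| - (d + 1 choose 2)`; when `v` is off the affine span of `B` the dimension grows
by one, but then `C = A`.

The ideal `I` is generated by the monomials `x^s`, `s ∈ S(I)`, and `I²` by the `x^s`,
`s ∈ S(I) + S(I)`, all of one degree `D`. Reading off the coefficients in degree `D` kills `𝔪 · I²`,
so it maps the `K`-span of any generating set of `I²` onto `K^(S(I) + S(I))`.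
-/

open Module Pointwise Finset

section FreshSummands

variable {V : Type*} [AddCancelCommMonoid V] [DecidableEq V]

def freshSummands (B : Finset V) (v : V) : Finset V := {a ∈ insert v B | v + a ∉ B + B}

theorem card_add_add_card_freshSummands_le (B : Finset V) (v : V) :
    #(B + B) + #(freshSummands B v) ≤ #(insert v B + insert v B) := by
  have hdisj : Disjoint (B + B) ((freshSummands B v).image (v + ·)) := by
    rw [disjoint_right]
    rintro _ hx
    obtain ⟨a, ha, rfl⟩ := mem_image.1 hx
    exact (mem_filter.1 ha).2
  have hsub : B + B ∪ (freshSummands B v).image (v + ·) ⊆ insert v B + insert v B := by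
    refine union_subset (add_subset_add (subset_insert v B) (subset_insert v B)) ?_
    intro _ hx
    obtain ⟨a, ha, rfl⟩ := mem_image.1 hx
    exact add_mem_add (mem_insert_self v B) (mem_filter.1 ha).1
  simpa [card_union_of_disjoint hdisj, card_image_of_injective _ (add_right_injective v)]
    using card_le_card hsub

end FreshSummands

section FinrankVectorSpan

variable {k V : Type*} [DivisionRing k] [AddCommGroup V] [Module k V]

theorem finrank_vectorSpan_add_one_le_card [DecidableEq V] {s : Finset V} (hs : s.Nonempty) :
    finrank k (vectorSpan k (s : Set V)) + 1 ≤ #s := by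
  have h := finrank_vectorSpan_image_finset_le k id s (n := #s - 1)
    (Nat.succ_pred_eq_of_pos hs.card_pos).symm
  rw [image_id] at h
  have := hs.card_pos
  omega

theorem finrank_vectorSpan_le_of_subset_affineSpan {s t : Set V} (ht : t.Finite)
    (hst : s ⊆ affineSpan k t) : finrank k (vectorSpan k s) ≤ finrank k (vectorSpan k t) := by
  have := finiteDimensional_direction_affineSpan_of_finite k ht
  rw [← direction_affineSpan, ← direction_affineSpan]
  exact Submodule.finrank_mono (AffineSubspace.direction_le (affineSpan_le.2 hst))

theorem AffineSubspace.mem_of_add_eq_add {s : AffineSubspace k V} {a b c d : V}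
    (h : a + b = c + d) (ha : a ∈ s) (hb : b ∈ s) (hc : c ∈ s) : d ∈ s := by
  have hd : (a -ᵥ c) +ᵥ b = d := by
    rw [vsub_eq_sub, vadd_eq_add, sub_add_eq_add_sub, h, add_sub_cancel_left]
  exact hd ▸ AffineSubspace.vadd_mem_of_mem_direction (AffineSubspace.vsub_mem_direction ha hc) hb

theorem finrank_vectorSpan_image_linearEquiv {W : Type*} [AddCommGroup W] [Module k W]
    (e : V ≃ₗ[k] W) (s : Set V) :
    finrank k (vectorSpan k (e '' s)) = finrank k (vectorSpan k s) := by
  rw [← e.finrank_map_eq]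
  exact congrArg (fun U : Submodule k W => finrank k U) (e.toLinearMap.toAffineMap.map_vectorSpan).symm

end FinrankVectorSpan

section Freiman

variable {k V : Type*} [DivisionRing k] [AddCommGroup V] [LinearOrder V] [IsOrderedAddMonoid V]
  [Module k V] {B : Finset V} {v : V}

theorem self_mem_freshSummands (hB : ∀ b ∈ B, b < v) : v ∈ freshSummands B v := by
  refine mem_filter.2 ⟨mem_insert_self v B, ?_⟩
  intro h
  obtain ⟨b, hb, b', hb', h⟩ := mem_add.1 h
  exact (add_lt_add (hB b hb) (hB b' hb')).ne h

theorem subset_affineSpan_freshSummands (hB : ∀ b ∈ B, b < v) :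
    ((insert v B : Finset V) : Set V) ⊆ affineSpan k (freshSummands B v : Set V) := by
  intro a ha
  refine Set.WellFoundedOn.induction (r := (· > ·)) (Set.toFinite _).wellFoundedOn ha
    (P := (· ∈ affineSpan k (freshSummands B v : Set V))) fun a ha ih => ?_
  by_cases haC : a ∈ freshSummands B v
  · exact subset_affineSpan k _ haC
  have hvB : v ∈ affineSpan k (freshSummands B v : Set V) :=
    subset_affineSpan k _ (self_mem_freshSummands hB)
  obtain ⟨b, hb, b', hb', hsum⟩ : ∃ b ∈ B, ∃ b' ∈ B, b + b' = v + a := by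
    by_contra h
    exact haC (mem_filter.2 ⟨by simpa using ha, mt mem_add.1 h⟩)
  have hab : a < b := lt_of_add_lt_add_left (a := v) (by
    rw [← hsum, add_comm v b]; gcongr; exact hB b' hb')
  have hab' : a < b' := lt_of_add_lt_add_left (a := v) (by
    rw [← hsum]; gcongr; exact hB b hb)
  exact AffineSubspace.mem_of_add_eq_add hsum (ih b (by simp [hb]) hab)
    (ih b' (by simp [hb']) hab') hvB

theorem freshSummands_eq_insert (hB : ∀ b ∈ B, b < v) (hv : v ∉ affineSpan k (B : Set V)) :
    freshSummands B v = insert v B := by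
  refine filter_true_of_mem fun a ha hsum => ?_
  obtain rfl | haB := mem_insert.1 ha
  · exact (mem_filter.1 (self_mem_freshSummands hB)).2 hsum
  obtain ⟨b, hb, b', hb', hsum⟩ := mem_add.1 hsum
  exact hv (AffineSubspace.mem_of_add_eq_add (hsum.trans (add_comm v a))
    (subset_affineSpan k _ hb) (subset_affineSpan k _ hb') (subset_affineSpan k _ haB))

variable (k) in
theorem freiman_card_add_self (A : Finset V) :
    (finrank k (vectorSpan k (A : Set V)) + 1) * #A
      ≤ #(A + A) + (finrank k (vectorSpan k (A : Set V)) + 1).choose 2 := by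
  induction A using Finset.induction_on_max with
  | empty => simp
  | insert v B hB ih =>
    set dA := finrank k (vectorSpan k ((insert v B : Finset V) : Set V))
    set dB := finrank k (vectorSpan k (B : Set V))
    have hcount := card_add_add_card_freshSummands_le B v
    have hcard : #(insert v B) = #B + 1 := card_insert_of_notMem fun h => (hB v h).false
    have := finiteDimensional_vectorSpan_of_finite k (insert v B).finite_toSet
    have hdB : dB ≤ dA := Submodule.finrank_mono (vectorSpan_mono k (by simp))
    have hdA : dA ≤ dB + 1 := by
      have := finrank_vectorSpan_insert_le_set k (B : Set V) v
      rwa [← coe_insert] at this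
    obtain hd | hd : dA = dB ∨ dA = dB + 1 := by omega
    · have hdC : dA ≤ finrank k (vectorSpan k (freshSummands B v : Set V)) :=
        finrank_vectorSpan_le_of_subset_affineSpan (finite_toSet _)
          (subset_affineSpan_freshSummands hB)
      have hC : dA + 1 ≤ #(freshSummands B v) :=
        (Nat.succ_le_succ hdC).trans
          (finrank_vectorSpan_add_one_le_card ⟨v, self_mem_freshSummands hB⟩)
      rw [hd] at hC
      rw [hd, hcard]
      linarith
    · have hv : v ∉ affineSpan k (B : Set V) := fun hv => by
        have := congrArg (finrank k ·.direction) (affineSpan_insert_eq_affineSpan k hv)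
        rw [direction_affineSpan, direction_affineSpan, ← coe_insert] at this
        omega
      rw [freshSummands_eq_insert hB hv, hcard] at hcount
      rw [hd, hcard, Nat.choose_succ_succ' (dB + 1), Nat.choose_one_right]
      linarith

end Freiman

theorem freiman_card_add_self_of_injective {M ι k : Type*} [AddCommMonoid M] [DecidableEq M]
    [LinearOrder ι] [WellFoundedLT ι] [Field k] [LinearOrder k] [IsStrictOrderedRing k]
    {f : M →+ ι → k} (hf : Function.Injective f) (A : Finset M) :
    (finrank k (vectorSpan k (f '' A)) + 1) * #A
      ≤ #(A + A) + (finrank k (vectorSpan k (f '' A)) + 1).choose 2 := by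
  let g := (toLexLinearEquiv k (ι → k)).toAddMonoidHom.comp f
  have hg : Function.Injective g := (toLexLinearEquiv k (ι → k)).injective.comp hf
  have h := freiman_card_add_self k (A.image g)
  rwa [← image_add g, card_image_of_injective _ hg, card_image_of_injective _ hg, coe_image,
    AddMonoidHom.coe_comp, Set.image_comp, LinearMap.toAddMonoidHom_coe, LinearEquiv.coe_coe,
    finrank_vectorSpan_image_linearEquiv] at h

theorem mu_span_le_card {R : Type*} [CommRing R] (s : Finset R) :
    mu (Ideal.span (s : Set R)) ≤ #s :=
  Nat.sInf_le ⟨s, rfl, rfl⟩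

namespace MvPolynomial

variable {σ R : Type*}

section CommSemiring

variable [CommSemiring R]

theorem monomial_one_mem_span_monomial_one_iff [Nontrivial R] {S : Set (σ →₀ ℕ)} {v : σ →₀ ℕ} :
    monomial v (1 : R) ∈ Ideal.span ((monomial · 1) '' S) ↔ ∃ s ∈ S, s ≤ v := by
  classical
  simp [mem_ideal_span_monomial_image, support_monomial]

theorem span_monomial_one_mul_span_monomial_one (S T : Set (σ →₀ ℕ)) :
    Ideal.span ((monomial · (1 : R)) '' S) * Ideal.span ((monomial · 1) '' T)
      = Ideal.span ((monomial · 1) '' (S + T)) := by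
  rw [Ideal.span_mul_span', ← Set.image2_mul, Set.image2_image_left, Set.image2_image_right,
    ← Set.image2_add, Set.image_image2]
  simp only [monomial_mul, one_mul]

end CommSemiring

theorem coeff_mul_of_mem_pow_idealOfVars [CommRing R] {D : ℕ} {p : MvPolynomial σ R}
    (hp : p ∈ idealOfVars σ R ^ D) (f : MvPolynomial σ R) {t : σ →₀ ℕ} (ht : t.degree = D) :
    coeff t (f * p) = constantCoeff f * coeff t p := by
  have hf : f - C (constantCoeff f) ∈ idealOfVars σ R ^ 1 := by
    refine (mem_pow_idealOfVars_iff' 1 _).2 fun x hx => ?_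
    rw [Nat.lt_one_iff, Finsupp.degree_eq_zero_iff] at hx
    simp [hx, constantCoeff_eq]
  have hfp : (f - C (constantCoeff f)) * p ∈ idealOfVars σ R ^ (1 + D) := by
    rw [pow_add]; exact Ideal.mul_mem_mul hf hp
  have := (mem_pow_idealOfVars_iff' _ _).1 hfp t (by omega)
  rwa [sub_mul, coeff_sub, coeff_C_mul, sub_eq_zero] at this

theorem mu_span_monomial_le_card [CommRing R] (T : Finset (σ →₀ ℕ)) :
    mu (Ideal.span ((monomial · (1 : R)) '' (T : Set (σ →₀ ℕ)))) ≤ #T := by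
  classical
  simpa [coe_image] using (mu_span_le_card (T.image (monomial · (1 : R)))).trans card_image_le

section Field

variable {K : Type*} [Field K]

theorem card_le_card_of_span_eq_span_monomial {D : ℕ} {T : Finset (σ →₀ ℕ)}
    (hT : ∀ t ∈ T, t.degree = D) {s : Finset (MvPolynomial σ K)}
    (hs : Ideal.span (s : Set (MvPolynomial σ K)) = Ideal.span ((monomial · 1) '' T)) :
    #T ≤ #s := by
  classical
  have hJ : Ideal.span (s : Set (MvPolynomial σ K)) ≤ idealOfVars σ K ^ D := by
    rw [hs, pow_idealOfVars_eq_span]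
    exact Ideal.span_mono (Set.image_mono fun t ht => hT t ht)
  let L : MvPolynomial σ K →ₗ[K] (T → K) := LinearMap.pi fun t => lcoeff K t
  have hL : ∀ p ∈ Ideal.span (s : Set (MvPolynomial σ K)),
      L p ∈ Submodule.span K (L '' s) := by
    intro p hp
    induction hp using Submodule.span_induction with
    | mem x hx => exact Submodule.subset_span ⟨x, hx, rfl⟩
    | zero => simp
    | add x y _ _ hx hy => simpa using Submodule.add_mem _ hx hy
    | smul f x hx ih =>
      have hfx : L (f * x) = constantCoeff f • L x := by
        ext t
        exact coeff_mul_of_mem_pow_idealOfVars (hJ hx) f (hT t t.2)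
      simpa [hfx] using Submodule.smul_mem _ (constantCoeff f) ih
  have htop : Submodule.span K (L '' s) = ⊤ := by
    rw [eq_top_iff, ← (Pi.basisFun K T).span_eq, Submodule.span_le]
    rintro _ ⟨t, rfl⟩
    have hLt : L (monomial t 1) = Pi.basisFun K T t := by
      ext t'
      simp only [L, LinearMap.pi_apply, lcoeff_apply, coeff_monomial, Pi.basisFun_apply,
        Pi.single_apply, Subtype.ext_iff]
      exact if_congr eq_comm rfl rfl
    exact hLt ▸ hL _ (hs ▸ Ideal.subset_span ⟨t, t.2, rfl⟩)
  calc #T = finrank K (T → K) := by simp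
    _ = finrank K (Submodule.span K (L '' s)) := by rw [htop, finrank_top]
    _ ≤ #(s.image L) := by rw [← coe_image]; exact finrank_span_finset_le_card _
    _ ≤ #s := card_image_le

theorem card_le_mu_span_monomial {D : ℕ} {T : Finset (σ →₀ ℕ)} (hT : ∀ t ∈ T, t.degree = D) :
    #T ≤ mu (Ideal.span ((monomial · (1 : K)) '' (T : Set (σ →₀ ℕ)))) := by
  classical
  refine le_csInf ⟨_, T.image (monomial · 1), rfl, by rw [coe_image]⟩ ?_
  rintro _ ⟨s, rfl, hs⟩
  exact card_le_card_of_span_eq_span_monomial hT hs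

theorem card_add_self_le_mu_span_monomial_sq [DecidableEq σ] {D : ℕ} {T : Finset (σ →₀ ℕ)}
    (hT : ∀ t ∈ T, t.degree = D) :
    #(T + T) ≤ mu (Ideal.span ((monomial · (1 : K)) '' (T : Set (σ →₀ ℕ))) ^ 2) := by
  rw [pow_two, span_monomial_one_mul_span_monomial_one, ← Finset.coe_add]
  refine card_le_mu_span_monomial (D := D + D) fun t ht => ?_
  obtain ⟨a, ha, b, hb, rfl⟩ := mem_add.1 ht
  rw [map_add, hT a ha, hT b hb]

end Field

end MvPolynomial

theorem Finsupp.eq_of_le_of_degree_eq {σ : Type*} {s v : σ →₀ ℕ} (h : s ≤ v)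
    (hd : s.degree = v.degree) : s = v := by
  obtain ⟨u, rfl⟩ := le_iff_exists_add.1 h
  rw [map_add, left_eq_add, Finsupp.degree_eq_zero_iff] at hd
  rw [hd, add_zero]

theorem minMonGens_span_monomial {K : Type*} [Field K] {n D : ℕ} {S : Set (Fin n →₀ ℕ)}
    (hS : ∀ v ∈ S, v.degree = D) : minMonGens (Ideal.span ((monomial · (1 : K)) '' S)) = S := by
  ext v
  simp only [minMonGens, Set.mem_ofPred, monomial_one_mem_span_monomial_one_iff]
  constructor
  · rintro ⟨⟨s, hs, hsv⟩, hmin⟩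
    obtain rfl | hne := eq_or_ne s v
    · exact hs
    · exact absurd ⟨s, hs, le_rfl⟩ (hmin s hsv hne)
  · intro hv
    refine ⟨⟨v, hv, le_rfl⟩, fun w hwv hne ⟨s, hs, hsw⟩ => hne (le_antisymm hwv ?_)⟩
    obtain rfl := Finsupp.eq_of_le_of_degree_eq (hsw.trans hwv) ((hS s hs).trans (hS v hv).symm)
    exact hsw

/-- Theorem 1.11 (via Freiman's theorem): if `I ⊂ K[x₁,…,xₙ]` is an equigenerated monomial
ideal and `d` is the dimension of the affine hull in `ℚⁿ` of the set `S(I)` of exponent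
vectors of the minimal monomial generators of `I`, then
`μ(I²) ≥ (d+1)·μ(I) - ((d+1) choose 2)`. -/
theorem numGen_square_freiman {K : Type*} [Field K] {n : ℕ}
    (I : Ideal (MvPolynomial (Fin n) K)) (hI : IsEquigenMonomialIdeal I)
    (d : ℕ)
    (hd : d = Module.finrank ℚ
      (affineSpan ℚ ((fun v : Fin n →₀ ℕ => fun i : Fin n => (v i : ℚ)) '' minMonGens I)).direction) :
    ((d + 1) * mu I : ℤ) - (d + 1).choose 2 ≤ (mu (I ^ 2) : ℤ) := by
  obtain ⟨D, S, -, hS, rfl⟩ := hI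
  have hdeg : ∀ v ∈ S, v.degree = D := fun v hv => (Finsupp.degree_eq_sum v).trans (hS v hv)
  obtain ⟨T, rfl⟩ := ((Finsupp.finite_of_degree_eq D).subset hdeg).exists_finset_coe
  rw [minMonGens_span_monomial (K := K) hdeg, direction_affineSpan] at hd
  let e : (Fin n →₀ ℕ) →+ (Fin n → ℚ) :=
    { toFun := fun v i => (v i : ℚ), map_zero' := by ext; simp, map_add' := by intros; ext; simp }
  have he : Function.Injective e := fun v w h =>
    Finsupp.ext fun i => Nat.cast_injective (congrFun h i : (v i : ℚ) = w i)
  have hfreiman := freiman_card_add_self_of_injective he T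
  rw [← show d = finrank ℚ (vectorSpan ℚ (e '' T)) from hd] at hfreiman
  have key := calc
    (d + 1) * mu (Ideal.span ((monomial · (1 : K)) '' (T : Set (Fin n →₀ ℕ))))
      ≤ (d + 1) * #T := Nat.mul_le_mul_left _ (mu_span_monomial_le_card T)
    _ ≤ #(T + T) + (d + 1).choose 2 := hfreiman
    _ ≤ _ := Nat.add_le_add_right (card_add_self_le_mu_span_monomial_sq (K := K) hdeg) _
  rw [sub_le_iff_le_add]
  exact_mod_cast key
end

section
/- Let K be a field and let I and J be equigenerated monomial ideals of height 2 in K[x,y]. Then μ(I ∩ J) < μ(IJ). -/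
open MvPolynomial

/-- A monomial ideal of `K[x,y]` has height 2 iff it is proper and contains a power of `x`
and a power of `y`. -/
def HasHeightTwo {K : Type*} [Field K] (I : Ideal (MvPolynomial (Fin 2) K)) : Prop :=
  I ≠ ⊤ ∧ ∃ k l : ℕ, 0 < k ∧ 0 < l ∧
    (X 0 : MvPolynomial (Fin 2) K) ^ k ∈ I ∧ (X 1 : MvPolynomial (Fin 2) K) ^ l ∈ I

/-!
Write `I` as generated by the monomials `x ^ a * y ^ (d - a)`, `a ∈ A`, and `J` by
`x ^ b * y ^ (e - b)`, `b ∈ B`; height two means `0, d ∈ A` and `0, e ∈ B`.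

The product `IJ` is generated by the monomials `x ^ c * y ^ (d + e - c)`, `c ∈ A + B`. They are
linearly independent and of one degree, so the degree-`(d + e)` parts of any generating set span
them, whence `μ(IJ) ≥ |A + B|`. In `I ∩ J`, the least power of `y` accompanying a given power of
`x` only changes at elements of `A ∪ B`, so `I ∩ J` is generated by `|A ∪ B|` monomials. Finally
`A + B` contains `A ∪ B` (as `0 ∈ A` and `0 ∈ B`) and also `d + e`, which exceeds all of `A ∪ B`.
-/

lemma mu_le_card {R : Type*} [CommRing R] {I : Ideal R} (s : Finset R)
    (hs : Ideal.span (s : Set R) = I) : mu I ≤ s.card :=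
  Nat.sInf_le ⟨s, rfl, hs⟩

open scoped Pointwise

section Monomial

variable {σ : Type*}

section CommSemiring

variable {R : Type*} [CommSemiring R]

lemma coeff_eq_zero_of_mem_span_monomial {D : ℕ} {U : Set (σ →₀ ℕ)} (hU : ∀ v ∈ U, D ≤ v.degree)
    {p : MvPolynomial σ R} (hp : p ∈ Ideal.span ((fun v => monomial v (1 : R)) '' U))
    {u : σ →₀ ℕ} (hu : u.degree < D) : coeff u p = 0 := by
  by_contra h
  obtain ⟨v, hvU, hvu⟩ := mem_ideal_span_monomial_image.mp hp u (mem_support_iff.mpr h)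
  exact (hu.trans_le (hU v hvU)).not_ge (Finsupp.degree_mono hvu)

lemma homogeneousComponent_mul_of_coeff_eq_zero {D : ℕ} {p : MvPolynomial σ R}
    (hp : ∀ u : σ →₀ ℕ, u.degree < D → coeff u p = 0)
    (r : MvPolynomial σ R) :
    homogeneousComponent D (r * p) = coeff 0 r • homogeneousComponent D p := by
  classical
  ext u
  rw [coeff_smul, coeff_homogeneousComponent, coeff_homogeneousComponent, smul_eq_mul]
  split_ifs with hu
  · rw [coeff_mul, Finset.sum_eq_single (0, u)]
    · rintro ⟨w, z⟩ hwz hne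
      obtain rfl : w + z = u := Finset.HasAntidiagonal.mem_antidiagonal.mp hwz
      have hw : w.degree ≠ 0 := fun h => hne <| by
        rw [(Finsupp.degree_eq_zero_iff w).mp h, zero_add]
      have hz : z.degree < D := by rw [← hu, map_add]; omega
      exact mul_eq_zero_of_right _ (hp z hz)
    · simp
  · rw [mul_zero]

lemma span_monomial_inf_span_monomial {S T G : Set (σ →₀ ℕ)}
    (h : ∀ u, ((∃ v ∈ S, v ≤ u) ∧ ∃ v ∈ T, v ≤ u) ↔ ∃ v ∈ G, v ≤ u) :
    Ideal.span ((fun v => monomial v (1 : R)) '' S) ⊓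
      Ideal.span ((fun v => monomial v (1 : R)) '' T) =
      Ideal.span ((fun v => monomial v (1 : R)) '' G) := by
  ext p
  simp only [Ideal.mem_inf, mem_ideal_span_monomial_image, ← h]
  exact forall₂_and.symm

lemma span_monomial_mul_span_monomial (S T : Set (σ →₀ ℕ)) :
    Ideal.span ((fun v => monomial v (1 : R)) '' S) *
      Ideal.span ((fun v => monomial v (1 : R)) '' T) =
      Ideal.span ((fun v => monomial v (1 : R)) '' (S + T)) := by
  rw [Ideal.span_mul_span', ← Set.image2_mul, Set.image2_image_left, Set.image2_image_right,
    ← Set.image2_add, Set.image_image2]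
  simp only [monomial_mul, mul_one]

end CommSemiring

variable {K : Type*} [Field K]

lemma homogeneousComponent_mem_span_of_mem_span {D : ℕ} {s : Set (MvPolynomial σ K)}
    (hs : ∀ q ∈ Ideal.span s, ∀ u : σ →₀ ℕ, u.degree < D → coeff u q = 0)
    {p : MvPolynomial σ K} (hp : p ∈ Ideal.span s) :
    homogeneousComponent D p ∈ Submodule.span K (homogeneousComponent D '' s) := by
  induction hp using Submodule.span_induction with
  | mem q hq => exact Submodule.subset_span ⟨q, hq, rfl⟩
  | zero => simp
  | add q₁ q₂ _ _ h₁ h₂ => rw [map_add]; exact add_mem h₁ h₂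
  | smul r q hq h =>
    rw [smul_eq_mul, homogeneousComponent_mul_of_coeff_eq_zero (hs q hq) r]
    exact Submodule.smul_mem _ _ h

lemma card_le_mu_span_monomial {D : ℕ} (U : Finset (σ →₀ ℕ))
    (hU : ∀ v ∈ U, v.degree = D) :
    U.card ≤ mu (Ideal.span ((fun v => monomial v (1 : K)) '' (U : Set (σ →₀ ℕ)))) := by
  classical
  refine le_csInf ⟨_, U.image fun v => monomial v (1 : K), rfl, by rw [Finset.coe_image]⟩ ?_
  rintro _ ⟨s, rfl, hs⟩
  have hli : LinearIndependent K
      fun v : U => (monomial (v : σ →₀ ℕ) (1 : K) : MvPolynomial σ K) := by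
    have h := (basisMonomials σ K).linearIndependent.comp _
      (Subtype.val_injective (p := (· ∈ U)))
    rwa [coe_basisMonomials] at h
  have hspan : Set.range (fun v : U => monomial (v : σ →₀ ℕ) (1 : K)) ≤
      (Submodule.span K (s.image (homogeneousComponent D) : Set (MvPolynomial σ K)) :
        Set (MvPolynomial σ K)) := by
    rintro _ ⟨v, rfl⟩
    dsimp only
    have hv := isHomogeneous_monomial (1 : K) (hU v v.2)
    rw [SetLike.mem_coe, Finset.coe_image, ← homogeneousComponent_eq_self hv]
    refine homogeneousComponent_mem_span_of_mem_span (fun q hq u hu => ?_) ?_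
    · rw [hs] at hq
      exact coeff_eq_zero_of_mem_span_monomial (fun v hv => (hU v hv).ge) hq hu
    · rw [hs]
      exact Ideal.subset_span ⟨v, v.2, rfl⟩
  calc U.card = Fintype.card U := (Fintype.card_coe U).symm
    _ ≤ Fintype.card ↑(s.image (homogeneousComponent D)) :=
      linearIndependent_le_span_aux' _ hli _ hspan
    _ ≤ s.card := by rw [Fintype.card_coe]; exact Finset.card_image_le

end Monomial

/-- The exponent of `x ^ a * y ^ b`, where `x = X 0` and `y = X 1`. -/
noncomputable def xyExp (a b : ℕ) : Fin 2 →₀ ℕ := Finsupp.single 0 a + Finsupp.single 1 b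

@[simp]
lemma xyExp_apply_zero (a b : ℕ) : xyExp a b 0 = a := by simp [xyExp]

@[simp]
lemma xyExp_apply_one (a b : ℕ) : xyExp a b 1 = b := by simp [xyExp]

lemma xyExp_le_iff {a b : ℕ} {u : Fin 2 →₀ ℕ} :
    xyExp a b ≤ u ↔ a ≤ u 0 ∧ b ≤ u 1 := by
  simp [Finsupp.le_def, Fin.forall_fin_two]

lemma xyExp_add_xyExp (a b a' b' : ℕ) : xyExp a b + xyExp a' b' = xyExp (a + a') (b + b') := by
  ext i; fin_cases i <;> simp

@[simp]
lemma degree_xyExp (a b : ℕ) : (xyExp a b).degree = a + b := by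
  simp [xyExp]

lemma eq_xyExp (u : Fin 2 →₀ ℕ) : u = xyExp (u 0) (u 1) := by
  ext i; fin_cases i <;> simp

/-- For `0 ∈ A`, the least `n` with `x ^ m * y ^ n ∈ equigenIdeal K d A`: the best generator
`x ^ a * y ^ (d - a)` has the largest `a ∈ A` with `a ≤ m`. -/
def minYExp (d : ℕ) (A : Finset ℕ) (m : ℕ) : ℕ := d - Nat.findGreatest (· ∈ A) m

lemma minYExp_antitone (d : ℕ) (A : Finset ℕ) : Antitone (minYExp d A) :=
  fun _ _ h => Nat.sub_le_sub_left (Nat.findGreatest_mono_right _ h) d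

section Staircase

variable {d e : ℕ} {A B : Finset ℕ}

lemma exists_le_and_sub_le_iff_minYExp_le {m n : ℕ} (hA : 0 ∈ A) :
    (∃ a ∈ A, a ≤ m ∧ d - a ≤ n) ↔ minYExp d A m ≤ n := by
  constructor
  · rintro ⟨a, ha, ham, han⟩
    have := Nat.le_findGreatest (P := (· ∈ A)) ham ha
    unfold minYExp; omega
  · exact fun h => ⟨_, Nat.findGreatest_spec (Nat.zero_le m) hA, Nat.findGreatest_le m, h⟩

lemma minYExp_findGreatest_union (hA : 0 ∈ A) (m : ℕ) :
    minYExp d A (Nat.findGreatest (· ∈ A ∪ B) m) = minYExp d A m := by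
  have hmem := Nat.findGreatest_spec (Nat.zero_le m) hA
  have hle : Nat.findGreatest (· ∈ A) m ≤ Nat.findGreatest (· ∈ A ∪ B) m :=
    Nat.le_findGreatest (Nat.findGreatest_le m) (Finset.mem_union_left B hmem)
  unfold minYExp
  rw [le_antisymm (Nat.findGreatest_mono_right _ (Nat.findGreatest_le m))
    (Nat.le_findGreatest hle hmem)]

lemma exists_mem_union_le_and_max_minYExp_le_iff {m n : ℕ} (hA : 0 ∈ A) (hB : 0 ∈ B) :
    (∃ c ∈ A ∪ B, c ≤ m ∧ max (minYExp d A c) (minYExp e B c) ≤ n) ↔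
      max (minYExp d A m) (minYExp e B m) ≤ n := by
  constructor
  · rintro ⟨c, -, hcm, hc⟩
    exact (max_le_max (minYExp_antitone d A hcm) (minYExp_antitone e B hcm)).trans hc
  · intro h
    refine ⟨_, Nat.findGreatest_spec (Nat.zero_le m) (Finset.mem_union_left B hA),
      Nat.findGreatest_le m, ?_⟩
    rwa [minYExp_findGreatest_union hA, Finset.union_comm, minYExp_findGreatest_union hB]

lemma card_union_lt_card_add (hd : 0 < d) (he : 0 < e) (hA0 : 0 ∈ A) (hB0 : 0 ∈ B)
    (hdA : d ∈ A) (heB : e ∈ B) (hA : ∀ a ∈ A, a ≤ d) (hB : ∀ b ∈ B, b ≤ e) :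
    (A ∪ B).card < (A + B).card := by
  have hnot : d + e ∉ A ∪ B := by
    rw [Finset.mem_union]
    rintro (h | h)
    · have := hA _ h; omega
    · have := hB _ h; omega
  have hsub : insert (d + e) (A ∪ B) ⊆ A + B := by
    refine Finset.insert_subset (Finset.add_mem_add hdA heB) (Finset.union_subset ?_ ?_)
    · exact fun a ha => by simpa using Finset.add_mem_add ha hB0
    · exact fun b hb => by simpa using Finset.add_mem_add hA0 hb
  calc (A ∪ B).card < (insert (d + e) (A ∪ B)).card :=
        Finset.card_lt_card (Finset.ssubset_insert hnot)
    _ ≤ (A + B).card := Finset.card_le_card hsub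

end Staircase

section EquigenIdeal

variable (K : Type*) [Field K]

noncomputable def equigenIdeal (d : ℕ) (A : Finset ℕ) : Ideal (MvPolynomial (Fin 2) K) :=
  Ideal.span ((fun v => monomial v (1 : K)) '' ((fun a => xyExp a (d - a)) '' A))

variable {K} {d e : ℕ} {A B : Finset ℕ}

lemma IsEquigenMonomialIdeal.exists_eq_equigenIdeal {I : Ideal (MvPolynomial (Fin 2) K)}
    (hI : IsEquigenMonomialIdeal I) :
    ∃ (d : ℕ) (A : Finset ℕ), (∀ a ∈ A, a ≤ d) ∧ I = equigenIdeal K d A := by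
  classical
  obtain ⟨d, S, -, hS, rfl⟩ := hI
  refine ⟨d, (Finset.range (d + 1)).filter fun a => xyExp a (d - a) ∈ S,
    fun a ha => Nat.lt_succ_iff.mp (Finset.mem_range.mp (Finset.mem_filter.mp ha).1), ?_⟩
  congr 2
  ext v
  simp only [Finset.coe_filter, Finset.mem_range, Set.mem_image, Set.mem_ofPred_eq]
  constructor
  · intro hv
    have hd : v 0 + v 1 = d := by simpa [Fin.sum_univ_two] using hS v hv
    have hv' : xyExp (v 0) (d - v 0) = v := by
      conv_rhs => rw [eq_xyExp v]
      congr 1; omega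
    exact ⟨v 0, ⟨by omega, by rwa [hv']⟩, hv'⟩
  · rintro ⟨a, ⟨-, ha⟩, rfl⟩
    exact ha

lemma monomial_mem_equigenIdeal_iff {m n : ℕ} :
    monomial (xyExp m n) (1 : K) ∈ equigenIdeal K d A ↔ ∃ a ∈ A, a ≤ m ∧ d - a ≤ n := by
  simp [equigenIdeal, mem_ideal_span_monomial_image, xyExp_le_iff]

lemma HasHeightTwo.pos_and_mem_equigenIdeal (hA : ∀ a ∈ A, a ≤ d)
    (h : HasHeightTwo (equigenIdeal K d A)) : 0 < d ∧ 0 ∈ A ∧ d ∈ A := by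
  obtain ⟨hne, k, l, -, -, hx, hy⟩ := h
  rw [X_pow_eq_monomial, show Finsupp.single 0 k = xyExp k 0 by simp [xyExp],
    monomial_mem_equigenIdeal_iff] at hx
  rw [X_pow_eq_monomial, show Finsupp.single 1 l = xyExp 0 l by simp [xyExp],
    monomial_mem_equigenIdeal_iff] at hy
  obtain ⟨a, ha, -, had⟩ := hx
  obtain ⟨b, hb, hb0, -⟩ := hy
  obtain rfl : a = d := by have := hA a ha; omega
  obtain rfl : b = 0 := by omega
  refine ⟨Nat.pos_of_ne_zero fun hd => hne ?_, hb, ha⟩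
  rw [Ideal.eq_top_iff_one, one_def, show (0 : Fin 2 →₀ ℕ) = xyExp 0 0 by simp [xyExp],
    monomial_mem_equigenIdeal_iff]
  exact ⟨0, hb, le_rfl, by omega⟩

lemma equigenIdeal_inf_equigenIdeal (hA : 0 ∈ A) (hB : 0 ∈ B) :
    equigenIdeal K d A ⊓ equigenIdeal K e B = Ideal.span ((fun v => monomial v (1 : K)) ''
      ((fun c => xyExp c (max (minYExp d A c) (minYExp e B c))) '' ↑(A ∪ B))) := by
  refine span_monomial_inf_span_monomial fun u => ?_
  simp only [Set.exists_mem_image, Finset.mem_coe, xyExp_le_iff]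
  rw [exists_le_and_sub_le_iff_minYExp_le hA, exists_le_and_sub_le_iff_minYExp_le hB,
    exists_mem_union_le_and_max_minYExp_le_iff hA hB, max_le_iff]

lemma mu_equigenIdeal_inf_le (hA : 0 ∈ A) (hB : 0 ∈ B) :
    mu (equigenIdeal K d A ⊓ equigenIdeal K e B) ≤ (A ∪ B).card := by
  classical
  rw [equigenIdeal_inf_equigenIdeal hA hB, Set.image_image, ← Finset.coe_image]
  exact (mu_le_card _ rfl).trans Finset.card_image_le

lemma equigenIdeal_mul_equigenIdeal (hA : ∀ a ∈ A, a ≤ d) (hB : ∀ b ∈ B, b ≤ e) :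
    equigenIdeal K d A * equigenIdeal K e B = equigenIdeal K (d + e) (A + B) := by
  rw [equigenIdeal, equigenIdeal, span_monomial_mul_span_monomial, equigenIdeal, Finset.coe_add,
    ← Set.image2_add, ← Set.image2_add, Set.image2_image_left, Set.image2_image_right,
    Set.image_image2, Set.image_image, Set.image_image2]
  congr 1
  refine Set.image2_congr fun a ha b hb => ?_
  have := hA a ha
  have := hB b hb
  rw [xyExp_add_xyExp, show d - a + (e - b) = d + e - (a + b) by omega]

lemma card_le_mu_equigenIdeal (hA : ∀ a ∈ A, a ≤ d) : A.card ≤ mu (equigenIdeal K d A) := by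
  have hinj : Function.Injective fun a => xyExp a (d - a) := fun a b h => by
    simpa using congr($h 0)
  rw [equigenIdeal, ← Finset.coe_image, ← Finset.card_image_of_injective A hinj]
  refine card_le_mu_span_monomial (D := d) _ fun v hv => ?_
  obtain ⟨a, ha, rfl⟩ := Finset.mem_image.mp hv
  have := hA a ha
  simp only [degree_xyExp]
  omega

end EquigenIdeal

/-- Corollary 3.2: for equigenerated monomial ideals `I, J ⊂ K[x,y]` of height 2 one has
`μ(I ∩ J) < μ(IJ)`. -/
theorem numGen_inter_lt_numGen_mul {K : Type*} [Field K]
    (I J : Ideal (MvPolynomial (Fin 2) K))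
    (hI : IsEquigenMonomialIdeal I) (hJ : IsEquigenMonomialIdeal J)
    (hIht : HasHeightTwo I) (hJht : HasHeightTwo J) :
    mu (I ⊓ J) < mu (I * J) := by
  obtain ⟨d, A, hAd, rfl⟩ := hI.exists_eq_equigenIdeal
  obtain ⟨e, B, hBe, rfl⟩ := hJ.exists_eq_equigenIdeal
  obtain ⟨hd, hA0, hdA⟩ := hIht.pos_and_mem_equigenIdeal hAd
  obtain ⟨he, hB0, heB⟩ := hJht.pos_and_mem_equigenIdeal hBe
  have hABde : ∀ c ∈ A + B, c ≤ d + e := by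
    intro c hc
    obtain ⟨a, ha, b, hb, rfl⟩ := Finset.mem_add.mp hc
    exact add_le_add (hAd a ha) (hBe b hb)
  calc mu (equigenIdeal K d A ⊓ equigenIdeal K e B) ≤ (A ∪ B).card :=
        mu_equigenIdeal_inf_le hA0 hB0
    _ < (A + B).card := card_union_lt_card_add hd he hA0 hB0 hdA heB hAd hBe
    _ ≤ mu (equigenIdeal K (d + e) (A + B)) := card_le_mu_equigenIdeal hABde
    _ = mu (equigenIdeal K d A * equigenIdeal K e B) := by
        rw [equigenIdeal_mul_equigenIdeal hAd hBe]
end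

section
/- Let K be a field and let I ⊂ K[x,y] be a monomial ideal of height 2 generated in degree d (i.e., all minimal monomial generators of I have total degree d), with μ(I) = m, and set J = (x^d, y^d). Then μ(I^k) = k(m−1) + 1 for some k ≥ 2 if and only if I^2 = JI. -/
open MvPolynomial

/-- A monomial ideal generated (necessarily minimally) in degree `d`. -/
def IsMonomialGeneratedInDegree {K : Type*} [Field K]
    (I : Ideal (MvPolynomial (Fin 2) K)) (d : ℕ) : Prop :=
  ∃ S : Set (Fin 2 →₀ ℕ), S.Nonempty ∧ (∀ v ∈ S, v 0 + v 1 = d) ∧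
    I = Ideal.span ((fun v => monomial v (1 : K)) '' S)


open Pointwise

/-!
Write the generators of `I` as `x^a y^(d-a)` with `a ∈ A ⊆ [0, d]`; height two means `0, d ∈ A`.
Then `I^k` is minimally generated by the monomials `x^c y^(kd-c)` with `c` in the `k`-fold sumset
`kA`, because monomials of one degree stay linearly independent modulo multiples of higher degree;
so `μ(I^k) = #(kA)`, and `I² = JI` says `A + A = A ∪ (d + A)`. The sumset `kA` always contains the
`k` translates `i * d + A` (`i < k`), which together have `k(#A - 1) + 1` elements. If
`A + A = A ∪ (d + A)` then `2A` is exactly this union; conversely an element `c` of `A + A` outside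
`A ∪ (d + A)` yields the element `(k - 2) * d + c` of `kA` outside the union, for every `k ≥ 2`.
-/

namespace Finsupp

theorem eq_of_le_of_degree_eq_s11 {σ : Type*} {u v : σ →₀ ℕ} (h : u ≤ v)
    (hd : u.degree = v.degree) : u = v := by
  obtain ⟨w, rfl⟩ := le_iff_exists_add.mp h
  rw [map_add, left_eq_add, degree_eq_zero_iff] at hd
  rw [hd, add_zero]

theorem degree_fin_two (v : Fin 2 →₀ ℕ) : v.degree = v 0 + v 1 := by
  rw [degree_eq_sum, Fin.sum_univ_two]

theorem injOn_apply_zero_degree_eq (D : ℕ) :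
    Set.InjOn (applyAddHom 0 : (Fin 2 →₀ ℕ) →+ ℕ) {v | v.degree = D} := by
  intro u hu v hv huv
  simp only [Set.mem_ofPred_eq, degree_fin_two] at hu hv
  simp only [applyAddHom_apply] at huv
  ext i
  fin_cases i <;> simp <;> omega

theorem degree_eq_of_mem_nsmul {σ : Type*} {S : Set (σ →₀ ℕ)} {D : ℕ}
    (hS : ∀ v ∈ S, v.degree = D) {k : ℕ} {v : σ →₀ ℕ} (hv : v ∈ k • S) : v.degree = k * D := by
  induction k generalizing v with
  | zero => rw [zero_nsmul, Set.mem_zero] at hv; simp [hv]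
  | succ k ih =>
    rw [succ_nsmul] at hv
    obtain ⟨u, hu, w, hw, rfl⟩ := hv
    rw [map_add, ih hu, hS w hw, add_mul, one_mul]

end Finsupp

namespace MvPolynomial

variable {σ K : Type*}

theorem coeff_mul_eq_coeff_zero_mul [CommSemiring K] {a p : MvPolynomial σ K} {t : σ →₀ ℕ}
    (hp : ∀ u ∈ p.support, t.degree ≤ u.degree) : coeff t (a * p) = coeff 0 a * coeff t p := by
  classical
  rw [coeff_mul]
  refine Finset.sum_eq_single_of_mem (0, t) (by simp) ?_
  rintro ⟨x, y⟩ hxy hne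
  rw [Finset.HasAntidiagonal.mem_antidiagonal] at hxy
  dsimp only at hxy
  by_cases hy : y ∈ p.support
  · have hx : x = 0 := by
      have := hp y hy
      rw [← hxy, map_add] at this
      exact (Finsupp.degree_eq_zero_iff x).mp (by omega)
    subst hx
    exact absurd (by rw [← hxy, zero_add]) hne
  · rw [notMem_support_iff.mp hy, mul_zero]

noncomputable def monomialIdeal (K : Type*) [CommSemiring K] (S : Set (σ →₀ ℕ)) :
    Ideal (MvPolynomial σ K) :=
  Ideal.span ((fun v => monomial v (1 : K)) '' S)

section CommSemiring

variable [CommSemiring K]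

theorem mem_monomialIdeal {S : Set (σ →₀ ℕ)} {p : MvPolynomial σ K} :
    p ∈ monomialIdeal K S ↔ ∀ u ∈ p.support, ∃ v ∈ S, v ≤ u :=
  mem_ideal_span_monomial_image

theorem monomial_mem_monomialIdeal [Nontrivial K] {S : Set (σ →₀ ℕ)} {u : σ →₀ ℕ} :
    monomial u (1 : K) ∈ monomialIdeal K S ↔ ∃ v ∈ S, v ≤ u := by
  classical
  rw [mem_monomialIdeal, support_monomial, if_neg one_ne_zero]
  simp

theorem monomialIdeal_mul (S T : Set (σ →₀ ℕ)) :
    monomialIdeal K S * monomialIdeal K T = monomialIdeal K (S + T) := by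
  rw [monomialIdeal, monomialIdeal, monomialIdeal, Ideal.span_mul_span', ← Set.image2_mul,
    ← Set.image2_add, Set.image_image2, Set.image2_image_left, Set.image2_image_right]
  simp only [monomial_mul, one_mul]

theorem monomialIdeal_pow (S : Set (σ →₀ ℕ)) (k : ℕ) :
    monomialIdeal K S ^ k = monomialIdeal K (k • S) := by
  induction k with
  | zero =>
    rw [pow_zero, zero_nsmul, ← Set.singleton_zero, monomialIdeal, Set.image_singleton,
      monomial_zero', C_1, Ideal.span_singleton_one, Ideal.one_eq_top]
  | succ k ih => rw [pow_succ, ih, monomialIdeal_mul, succ_nsmul]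

theorem degree_le_of_mem_monomialIdeal {S : Set (σ →₀ ℕ)} {D : ℕ}
    (hS : ∀ v ∈ S, v.degree = D) {p : MvPolynomial σ K} (hp : p ∈ monomialIdeal K S)
    {u : σ →₀ ℕ} (hu : u ∈ p.support) : D ≤ u.degree := by
  obtain ⟨v, hv, hvu⟩ := mem_monomialIdeal.mp hp u hu
  exact hS v hv ▸ Finsupp.degree_mono hvu

theorem single_mem_of_X_pow_mem_monomialIdeal [Nontrivial K] {S : Set (σ →₀ ℕ)} {D : ℕ}
    (hS : ∀ v ∈ S, v.degree = D) {i : σ} {k : ℕ} (h : X i ^ k ∈ monomialIdeal K S) :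
    Finsupp.single i D ∈ S := by
  rw [X_pow_eq_monomial, monomial_mem_monomialIdeal] at h
  obtain ⟨v, hv, hvk⟩ := h
  have hvi : v = Finsupp.single i (v i) := Finsupp.support_subset_singleton.mp
    ((Finsupp.support_mono hvk).trans Finsupp.support_single_subset)
  have hD : v i = D := by rw [← hS v hv, hvi, Finsupp.degree_single, Finsupp.single_eq_same]
  rwa [← hD, ← hvi]

theorem monomialIdeal_le_monomialIdeal_iff [Nontrivial K] {S T : Set (σ →₀ ℕ)} {D : ℕ}
    (hS : ∀ v ∈ S, v.degree = D) (hT : ∀ v ∈ T, v.degree = D) :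
    monomialIdeal K S ≤ monomialIdeal K T ↔ S ⊆ T := by
  refine ⟨fun h v hv => ?_, fun h => Ideal.span_mono (Set.image_mono h)⟩
  obtain ⟨w, hw, hwv⟩ := monomial_mem_monomialIdeal.mp (h (Ideal.subset_span ⟨v, hv, rfl⟩))
  rwa [← Finsupp.eq_of_le_of_degree_eq_s11 hwv (by rw [hS v hv, hT w hw])]

theorem monomialIdeal_inj [Nontrivial K] {S T : Set (σ →₀ ℕ)} {D : ℕ}
    (hS : ∀ v ∈ S, v.degree = D) (hT : ∀ v ∈ T, v.degree = D) :
    monomialIdeal K S = monomialIdeal K T ↔ S = T := by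
  simp only [le_antisymm_iff, monomialIdeal_le_monomialIdeal_iff hS hT,
    monomialIdeal_le_monomialIdeal_iff hT hS]

end CommSemiring

section Field

variable [Field K]

/-- Multiplying into degree `D` only sees the constant term of the multiplier, so the degree-`D`
coefficients of any generating set span `K^S`. -/
theorem card_le_card_of_span_eq_monomialIdeal {S : Finset (σ →₀ ℕ)} {D : ℕ}
    (hS : ∀ v ∈ S, v.degree = D) {s : Finset (MvPolynomial σ K)}
    (hs : Ideal.span (s : Set (MvPolynomial σ K)) = monomialIdeal K S) : S.card ≤ s.card := by
  classical
  let c : MvPolynomial σ K →ₗ[K] (S → K) := LinearMap.pi fun t => lcoeff K (t : σ →₀ ℕ)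
  have hc_mul : ∀ a, ∀ p ∈ monomialIdeal K (S : Set (σ →₀ ℕ)), c (a * p) = coeff 0 a • c p := by
    intro a p hp
    funext t
    refine coeff_mul_eq_coeff_zero_mul fun u hu => ?_
    rw [hS t t.2]
    exact degree_le_of_mem_monomialIdeal hS hp hu
  have hc_span : ∀ p ∈ Ideal.span (s : Set (MvPolynomial σ K)),
      c p ∈ Submodule.span K (c '' s) := by
    intro p hp
    induction hp using Submodule.span_induction with
    | mem x hx => exact Submodule.subset_span ⟨x, hx, rfl⟩
    | zero => simp
    | add x y _ _ hx hy => simpa using add_mem hx hy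
    | smul a x hx ih =>
      rw [smul_eq_mul, hc_mul a x (hs ▸ hx)]
      exact Submodule.smul_mem _ _ ih
  have htop : Submodule.span K (c '' s) = ⊤ := by
    rw [eq_top_iff, ← (Pi.basisFun K S).span_eq, Submodule.span_le]
    rintro - ⟨t, rfl⟩
    rw [SetLike.mem_coe]
    convert hc_span (monomial t 1) (hs ▸ Ideal.subset_span ⟨t, t.2, rfl⟩) using 1
    funext t'
    simp [c, coeff_monomial, Pi.single_apply, eq_comm]
  calc S.card = Module.finrank K (S → K) := by simp
    _ = (c '' s).finrank K := by rw [Set.finrank, htop, finrank_top]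
    _ ≤ (s.image c).card := by simpa using finrank_span_finset_le_card (R := K) (s.image c)
    _ ≤ s.card := Finset.card_image_le

theorem mu_monomialIdeal {S : Finset (σ →₀ ℕ)} {D : ℕ} (hS : ∀ v ∈ S, v.degree = D) :
    mu (monomialIdeal K (S : Set (σ →₀ ℕ))) = S.card := by
  classical
  have hgen : (S.image fun v => monomial v (1 : K)).card = S.card ∧
      Ideal.span ↑(S.image fun v => monomial v (1 : K)) = monomialIdeal K (S : Set (σ →₀ ℕ)) :=
    ⟨Finset.card_image_of_injective _ (monomial_left_injective one_ne_zero),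
      by rw [Finset.coe_image, monomialIdeal]⟩
  refine le_antisymm (Nat.sInf_le ⟨_, hgen⟩) (le_csInf ⟨_, _, hgen⟩ ?_)
  rintro n ⟨s, rfl, hs⟩
  exact card_le_card_of_span_eq_monomialIdeal hS hs

end Field

end MvPolynomial

namespace Finset

def translatesUnion (A : Finset ℕ) (d k : ℕ) : Finset ℕ :=
  (range k).biUnion fun i => A.image (i * d + ·)

section translatesUnion

variable {A : Finset ℕ} {d : ℕ}

theorem mem_translatesUnion {k x : ℕ} :
    x ∈ translatesUnion A d k ↔ ∃ i < k, ∃ a ∈ A, i * d + a = x := by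
  simp [translatesUnion]

theorem translatesUnion_two : translatesUnion A d 2 = {0, d} + A := by
  ext x
  simp only [mem_translatesUnion, mem_add, mem_insert, mem_singleton]
  constructor
  · rintro ⟨i, hi, a, ha, rfl⟩
    interval_cases i
    · exact ⟨0, .inl rfl, a, ha, by simp⟩
    · exact ⟨d, .inr rfl, a, ha, by simp⟩
  · rintro ⟨b, rfl | rfl, a, ha, rfl⟩
    · exact ⟨0, by omega, a, ha, by simp⟩
    · exact ⟨1, by omega, a, ha, by simp⟩

theorem card_translatesUnion (h0 : 0 ∈ A) (hd : d ∈ A) (hA : ∀ a ∈ A, a ≤ d) (k : ℕ) :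
    (translatesUnion A d (k + 1)).card = (k + 1) * (A.card - 1) + 1 := by
  have hA1 : 1 ≤ A.card := card_pos.mpr ⟨0, h0⟩
  induction k with
  | zero => simp [translatesUnion]; omega
  | succ k ih =>
    have hunion : translatesUnion A d (k + 1 + 1) =
        A.image ((k + 1) * d + ·) ∪ translatesUnion A d (k + 1) := by
      rw [translatesUnion, range_add_one, biUnion_insert]
      rfl
    have hinter : A.image ((k + 1) * d + ·) ∩ translatesUnion A d (k + 1) = {(k + 1) * d} := by
      ext x
      simp only [mem_inter, mem_image, mem_translatesUnion, mem_singleton]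
      constructor
      · rintro ⟨⟨a, -, rfl⟩, i, hi, b, hb, hx⟩
        have : i * d + d ≤ (k + 1) * d := by nlinarith
        have := hA b hb
        omega
      · rintro rfl
        exact ⟨⟨0, h0, by simp⟩, k, by omega, d, hd, by ring⟩
    have hcard :=
      card_union_add_card_inter (A.image ((k + 1) * d + ·)) (translatesUnion A d (k + 1))
    rw [← hunion, hinter, card_image_of_injective _ (add_right_injective _), ih,
      card_singleton] at hcard
    have : (k + 1 + 1) * (A.card - 1) = (k + 1) * (A.card - 1) + (A.card - 1) := by ring
    omega

theorem translatesUnion_subset_nsmul (h0 : 0 ∈ A) (hd : d ∈ A) (k : ℕ) :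
    translatesUnion A d k ⊆ k • A := by
  intro x hx
  obtain ⟨i, hi, a, ha, rfl⟩ := mem_translatesUnion.mp hx
  obtain ⟨j, rfl⟩ : ∃ j, k = i + 1 + j := ⟨k - i - 1, by omega⟩
  rw [add_nsmul, add_nsmul, one_nsmul]
  simpa using add_mem_add (add_mem_add (nsmul_mem_nsmul (n := i) hd) ha)
    (nsmul_mem_nsmul (n := j) h0)

theorem mem_translatesUnion_two_of_add_mem (h0 : 0 ∈ A) (hA : ∀ a ∈ A, a ≤ d) {j x : ℕ}
    (hx : j * d + x ∈ translatesUnion A d (j + 2)) : x ∈ translatesUnion A d 2 := by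
  obtain ⟨i, hi, a, ha, hia⟩ := mem_translatesUnion.mp hx
  rw [mem_translatesUnion]
  rcases lt_or_ge i j with hij | hij
  · have : i * d + d ≤ j * d := by nlinarith
    have := hA a ha
    exact ⟨0, by omega, 0, h0, by omega⟩
  · obtain ⟨l, rfl⟩ := Nat.exists_eq_add_of_le hij
    exact ⟨l, by omega, a, ha, by rw [add_mul] at hia; omega⟩

theorem exists_card_nsmul_eq_iff (h0 : 0 ∈ A) (hd : d ∈ A) (hA : ∀ a ∈ A, a ≤ d) :
    (∃ k, 2 ≤ k ∧ (k • A).card = k * (A.card - 1) + 1) ↔ 2 • A = {0, d} + A := by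
  have hcard_iff : ∀ k, (k + 1) • A = translatesUnion A d (k + 1) ↔
      ((k + 1) • A).card = (k + 1) * (A.card - 1) + 1 := fun k => by
    rw [← card_translatesUnion h0 hd hA k]
    refine ⟨fun h => h ▸ rfl, fun h => (eq_of_subset_of_card_le
      (translatesUnion_subset_nsmul h0 hd (k + 1)) h.le).symm⟩
  rw [← translatesUnion_two (d := d)]
  constructor
  · rintro ⟨k, hk, hcard⟩
    obtain ⟨j, rfl⟩ : ∃ j, k = j + 1 + 1 := ⟨k - 2, by omega⟩
    have hU := (hcard_iff (j + 1)).mpr hcard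
    refine Subset.antisymm (fun x hx => ?_) (translatesUnion_subset_nsmul h0 hd 2)
    refine mem_translatesUnion_two_of_add_mem (j := j) h0 hA ?_
    rw [← hU, add_assoc, add_nsmul, ← smul_eq_mul]
    exact add_mem_add (nsmul_mem_nsmul hd) hx
  · exact fun h => ⟨2, le_rfl, (hcard_iff 1).mp h⟩

end translatesUnion

end Finset

namespace MvPolynomial

variable {K : Type*} [Field K] {S : Finset (Fin 2 →₀ ℕ)} {d : ℕ}

local notation "π" => (Finsupp.applyAddHom 0 : (Fin 2 →₀ ℕ) →+ ℕ)

theorem mu_monomialIdeal_pow (hS : ∀ v ∈ S, v.degree = d) (k : ℕ) :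
    mu (monomialIdeal K (S : Set (Fin 2 →₀ ℕ)) ^ k) = (k • S.image π).card := by
  classical
  have hkS : ∀ v ∈ k • S, v.degree = k * d := fun v hv =>
    Finsupp.degree_eq_of_mem_nsmul hS (by rwa [← Finset.coe_nsmul])
  rw [monomialIdeal_pow, ← Finset.coe_nsmul, mu_monomialIdeal hkS, ← Finset.image_nsmul,
    Finset.card_image_of_injOn ((Finsupp.injOn_apply_zero_degree_eq (k * d)).mono hkS)]

theorem monomialIdeal_sq_eq_span_mul_iff (hS : ∀ v ∈ S, v.degree = d) :
    monomialIdeal K (S : Set (Fin 2 →₀ ℕ)) ^ 2 =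
        Ideal.span {X 0 ^ d, X 1 ^ d} * monomialIdeal K (S : Set (Fin 2 →₀ ℕ)) ↔
      2 • S.image π = {0, d} + S.image π := by
  classical
  set J : Set (Fin 2 →₀ ℕ) := {Finsupp.single 0 d, Finsupp.single 1 d}
  have hJ : Ideal.span {X 0 ^ d, X 1 ^ d} = monomialIdeal K J := by
    simp [monomialIdeal, J, Set.image_pair, X_pow_eq_monomial]
  have hJS : ∀ v ∈ J + S, v.degree = 2 * d := by
    rintro - ⟨u, hu, w, hw, rfl⟩
    rcases hu with rfl | rfl <;> simp [hS w hw, two_mul]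
  have hSS : ∀ v ∈ 2 • (S : Set (Fin 2 →₀ ℕ)), v.degree = 2 * d :=
    fun v hv => Finsupp.degree_eq_of_mem_nsmul hS hv
  rw [hJ, monomialIdeal_pow, monomialIdeal_mul, monomialIdeal_inj hSS hJS,
    ← (Finsupp.injOn_apply_zero_degree_eq (2 * d)).image_eq_image_iff hSS hJS,
    Set.image_nsmul, Set.image_add, ← Finset.coe_inj]
  simp [J, Set.image_pair, Set.pair_comm]

end MvPolynomial

/-- Corollary 3.5: let `I ⊂ K[x,y]` be a monomial ideal of height 2 generated in degree `d`
with `μ(I) = m`, and let `J = (x^d, y^d)`. Then `μ(I^k) = k(m-1)+1` for some `k ≥ 2` if and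
only if `I² = JI`. -/
theorem numGen_power_eq_iff_reduction {K : Type*} [Field K]
    (I : Ideal (MvPolynomial (Fin 2) K)) (d m : ℕ)
    (hgen : IsMonomialGeneratedInDegree I d) (hht : HasHeightTwo I) (hm : mu I = m) :
    (∃ k : ℕ, 2 ≤ k ∧ mu (I ^ k) = k * (m - 1) + 1) ↔
      I ^ 2 = (Ideal.span {X 0 ^ d, X 1 ^ d} : Ideal (MvPolynomial (Fin 2) K)) * I := by
  obtain ⟨S, -, hdeg, rfl : I = monomialIdeal K S⟩ := hgen
  have hS : ∀ v ∈ S, v.degree = d := fun v hv => (Finsupp.degree_fin_two v).trans (hdeg v hv)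
  lift S to Finset (Fin 2 →₀ ℕ) using (Finsupp.finite_of_degree_eq d).subset hS
  obtain ⟨-, _, _, -, -, hx, hy⟩ := hht
  set A := S.image (Finsupp.applyAddHom 0 : (Fin 2 →₀ ℕ) →+ ℕ)
  have hd : d ∈ A :=
    Finset.mem_image.mpr ⟨_, single_mem_of_X_pow_mem_monomialIdeal hS hx, by simp⟩
  have h0 : 0 ∈ A :=
    Finset.mem_image.mpr ⟨_, single_mem_of_X_pow_mem_monomialIdeal hS hy, by simp⟩
  have hA : ∀ a ∈ A, a ≤ d := by
    simp only [A, Finset.mem_image]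
    rintro - ⟨v, hv, rfl⟩
    exact hS v hv ▸ Finsupp.le_degree 0 v
  have hmA : m = A.card := by
    rw [← hm, ← pow_one (monomialIdeal K _), mu_monomialIdeal_pow hS, one_nsmul]
  simp_rw [hmA, mu_monomialIdeal_pow hS]
  rw [monomialIdeal_sq_eq_span_mul_iff hS, Finset.exists_card_nsmul_eq_iff h0 hd hA]
end

section
/- Let K be a field and let I_1,…,I_r ⊂ K[x,y] be monomial ideals, all equigenerated in the same degree d, such that each I_j has height 2 and I_1 + … + I_r = (x,y)^d. Then (I_1 + … + I_r)^k = I_1^k + … + I_r^k for all k ≥ 1. -/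
open MvPolynomial

section Aux

open scoped Pointwise

lemma ideal_sum_le {R : Type*} [CommSemiring R] {n : ℕ} {f : Fin n → Ideal R} {J : Ideal R}
    (h : ∀ j, f j ≤ J) : ∑ j, f j ≤ J :=
  Finset.sum_induction f (· ≤ J) (fun a b ha hb => by
    rw [Submodule.add_eq_sup]; exact sup_le ha hb) bot_le (fun j _ => h j)

lemma ideal_le_sum {R : Type*} [CommSemiring R] {n : ℕ} (f : Fin n → Ideal R) (j : Fin n) :
    f j ≤ ∑ i, f i :=
  Finset.single_le_sum (fun i _ => bot_le) (Finset.mem_univ j)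

lemma ideal_sum_eq_iSup {R : Type*} [CommSemiring R] {n : ℕ} (f : Fin n → Ideal R) :
    ∑ j, f j = ⨆ j, f j :=
  le_antisymm (ideal_sum_le fun j => le_iSup f j) (iSup_le fun j => ideal_le_sum f j)

/-- `k`-fold pointwise sumset. -/
def sumSet (S : Set (Fin 2 →₀ ℕ)) : ℕ → Set (Fin 2 →₀ ℕ)
  | 0 => {0}
  | (k + 1) => S + sumSet S k

lemma span_mon_pow {K : Type*} [Field K] (S : Set (Fin 2 →₀ ℕ)) (k : ℕ) :
    (Ideal.span ((fun v => monomial v (1 : K)) '' S)) ^ k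
      = Ideal.span ((fun v => monomial v (1 : K)) '' sumSet S k) := by
  induction k with
  | zero =>
    simp [sumSet, Set.image_singleton, Ideal.span_singleton_one]
  | succ k ih =>
    rw [pow_succ', ih, Ideal.span_mul_span']
    congr 1
    ext p
    simp only [Set.mem_mul, Set.mem_image, sumSet, Set.mem_add]
    constructor
    · rintro ⟨_, ⟨u, hu, rfl⟩, _, ⟨v, hv, rfl⟩, rfl⟩
      exact ⟨u + v, ⟨u, hu, v, hv, rfl⟩, by rw [monomial_mul, one_mul]⟩
    · rintro ⟨_, ⟨u, hu, v, hv, rfl⟩, rfl⟩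
      exact ⟨_, ⟨u, hu, rfl⟩, _, ⟨v, hv, rfl⟩, by rw [monomial_mul, one_mul]⟩

lemma sumSet_deg {S : Set (Fin 2 →₀ ℕ)} {d : ℕ} (hS : ∀ v ∈ S, v 0 + v 1 = d) :
    ∀ k, ∀ w ∈ sumSet S k, w 0 + w 1 = d * k := by
  intro k
  induction k with
  | zero => intro w hw; simp [sumSet] at hw; simp [hw]
  | succ k ih =>
    rintro w hw
    obtain ⟨u, hu, v, hv, rfl⟩ := hw
    have h1 := hS u hu
    have h2 := ih v hv
    simp only [Finsupp.add_apply]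
    rw [Nat.mul_succ]
    omega

/-- If a monomial ideal equigenerated in degree `d` contains `X i ^ k` then
`single i d` belongs to its generating exponent set. -/
lemma single_mem_of_pow_mem {K : Type*} [Field K] {S : Set (Fin 2 →₀ ℕ)} {d : ℕ}
    (hdeg : ∀ v ∈ S, v 0 + v 1 = d) {i : Fin 2} {k : ℕ}
    (h : (X i : MvPolynomial (Fin 2) K) ^ k
        ∈ Ideal.span ((fun v => monomial v (1 : K)) '' S)) :
    Finsupp.single i d ∈ S := by
  rw [mem_ideal_span_monomial_image] at h
  obtain ⟨s, hs, hle⟩ := h (Finsupp.single i k)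
    (by rw [support_X_pow]; exact Finset.mem_singleton_self _)
  have hsd := hdeg s hs
  have hle' : ∀ j, s j ≤ (Finsupp.single i k) j := fun j => hle j
  have : s = Finsupp.single i d := by
    fin_cases i
    · have h1 : s 1 = 0 := by have := hle' 1; simpa using this
      ext j
      fin_cases j <;> simp_all
    · have h0 : s 0 = 0 := by have := hle' 0; simpa using this
      ext j
      fin_cases j <;> simp_all
  exact this ▸ hs

end Aux

/-- Proposition 3.6: if `I₁,…,I_r ⊂ K[x,y]` are monomial ideals of height 2, all equigenerated
in the same degree `d`, with `I₁ + ⋯ + I_r = (x,y)^d`, then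
`(I₁ + ⋯ + I_r)^k = I₁^k + ⋯ + I_r^k` for all `k ≥ 1`. -/
theorem sum_pow_eq_sum_of_pow {K : Type*} [Field K] {r : ℕ} (hr : 0 < r) (d : ℕ)
    (I : Fin r → Ideal (MvPolynomial (Fin 2) K))
    (hgen : ∀ j, IsMonomialGeneratedInDegree (I j) d)
    (hht : ∀ j, HasHeightTwo (I j))
    (hsum : ∑ j, I j = (Ideal.span {X 0, X 1} : Ideal (MvPolynomial (Fin 2) K)) ^ d) :
    ∀ k : ℕ, 1 ≤ k → (∑ j, I j) ^ k = ∑ j, (I j) ^ k := by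
  choose S hSne hSdeg hIeq using hgen
  set j0 : Fin r := ⟨0, hr⟩
  -- d is positive
  have hd : 0 < d := by
    rcases Nat.eq_zero_or_pos d with h0 | h; swap
    · exact h
    exfalso
    obtain ⟨v, hv⟩ := hSne j0
    have hv0 : v = 0 := by
      have := hSdeg j0 v hv
      ext i; fin_cases i <;> simp <;> omega
    have h1 : (1 : MvPolynomial (Fin 2) K) ∈ I j0 := by
      rw [hIeq j0]
      refine Ideal.subset_span ⟨v, hv, ?_⟩
      simp [hv0]
    exact (hht j0).1 (Ideal.eq_top_iff_one _ |>.mpr h1)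
  -- each S j contains the pure powers
  have hx : ∀ j, Finsupp.single 0 d ∈ S j := by
    intro j
    obtain ⟨-, k, l, hk, hl, hxk, hyl⟩ := hht j
    exact single_mem_of_pow_mem (hSdeg j) (by rw [← hIeq j]; exact hxk)
  have hy : ∀ j, Finsupp.single 1 d ∈ S j := by
    intro j
    obtain ⟨-, k, l, hk, hl, hxk, hyl⟩ := hht j
    exact single_mem_of_pow_mem (hSdeg j) (by rw [← hIeq j]; exact hyl)
  -- the sum is the span of the union of the exponent sets
  have hUnion : ∑ j, I j = Ideal.span ((fun v => monomial v (1 : K)) '' ⋃ j, S j) := by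
    rw [ideal_sum_eq_iSup, Set.image_iUnion, Ideal.span_iUnion]
    exact iSup_congr fun j => hIeq j
  -- covering: every degree-d exponent vector occurs in some S j
  have hcover : ∀ t ≤ d, ∃ j,
      (Finsupp.single 0 t + Finsupp.single 1 (d - t) : Fin 2 →₀ ℕ) ∈ S j := by
    intro t ht
    have hmem : monomial (Finsupp.single 0 t + Finsupp.single 1 (d - t)) (1 : K)
        ∈ ∑ j, I j := by
      rw [hsum]
      have : monomial (Finsupp.single 0 t + Finsupp.single 1 (d - t)) (1 : K)
          = (X 0 ^ t * X 1 ^ (d - t) : MvPolynomial (Fin 2) K) := by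
        rw [X_pow_eq_monomial, X_pow_eq_monomial, monomial_mul, one_mul]
      have hmem2 : X 0 ^ t * X 1 ^ (d - t)
          ∈ (Ideal.span {X 0, X 1} : Ideal (MvPolynomial (Fin 2) K)) ^ (t + (d - t)) := by
        rw [pow_add]
        exact Ideal.mul_mem_mul
          (Ideal.pow_mem_pow (Ideal.subset_span (Set.mem_insert _ _)) t)
          (Ideal.pow_mem_pow (Ideal.subset_span (Set.mem_insert_of_mem _ (Set.mem_singleton _))) (d - t))
      rw [Nat.add_sub_cancel' ht] at hmem2
      rw [this]
      exact hmem2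
    rw [hUnion, mem_ideal_span_monomial_image] at hmem
    obtain ⟨s, hs, hle⟩ := hmem (Finsupp.single 0 t + Finsupp.single 1 (d - t))
      (by classical rw [support_monomial, if_neg one_ne_zero]; exact Finset.mem_singleton_self _)
    obtain ⟨j, hj⟩ := Set.mem_iUnion.mp hs
    have hle' : ∀ i, s i ≤ (Finsupp.single 0 t + Finsupp.single 1 (d - t) : Fin 2 →₀ ℕ) i :=
      fun i => hle i
    have h0 := hle' 0
    have h1 := hle' 1
    simp only [Finsupp.add_apply, Finsupp.single_apply] at h0 h1
    have hsd := hSdeg j s hj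
    have : s = Finsupp.single 0 t + Finsupp.single 1 (d - t) := by
      ext i; fin_cases i <;> simp_all <;> omega
    exact ⟨j, this ▸ hj⟩
  -- key: every monomial of degree d*k lies in the sum of k-th powers
  have key : ∀ k, 1 ≤ k → ∀ w : Fin 2 →₀ ℕ, w 0 + w 1 = d * k →
      monomial w (1 : K) ∈ ∑ j, (I j) ^ k := by
    intro k hk w hw
    by_cases hak : w 0 = d * k
    · -- pure power of x
      have hw1 : w 1 = 0 := by omega
      have hweq : w = k • Finsupp.single 0 d := by
        ext i
        fin_cases i <;> simp [Finsupp.smul_apply, hak, hw1, mul_comm]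
      have hm : monomial w (1 : K) = (monomial (Finsupp.single 0 d) (1 : K)) ^ k := by
        rw [monomial_pow, one_pow, hweq]
      have hmem : monomial (Finsupp.single 0 d) (1 : K) ∈ I j0 :=
        (hIeq j0) ▸ Ideal.subset_span ⟨_, hx j0, rfl⟩
      rw [hm]
      exact ideal_le_sum (fun j => I j ^ k) j0 (Ideal.pow_mem_pow hmem k)
    · have halt : w 0 < d * k := lt_of_le_of_ne (by omega) hak
      set q := w 0 / d with hq
      set t := w 0 % d with ht
      have htd : t < d := Nat.mod_lt _ hd
      have he2 : d * q + t = w 0 := Nat.div_add_mod (w 0) d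
      have hqk : q < k := by
        rw [hq, Nat.div_lt_iff_lt_mul hd, mul_comm]; omega
      set s' := k - (q + 1) with hs'
      have hks : q + 1 + s' = k := by omega
      have he : d * k = d * q + (d + d * s') := by rw [← hks]; ring
      obtain ⟨j, hj⟩ := hcover t htd.le
      have hb : w 1 = (d - t) + d * s' := by omega
      have hc1 : q * d = d * q := mul_comm q d
      have hc2 : s' * d = d * s' := mul_comm s' d
      have hweq : w = q • Finsupp.single 0 d
          + (Finsupp.single 0 t + Finsupp.single 1 (d - t)) + s' • Finsupp.single 1 d := by
        ext i
        fin_cases i <;>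
          simp [Finsupp.smul_apply, Finsupp.add_apply, Finsupp.single_apply] <;> omega
      have hm : monomial w (1 : K)
          = (monomial (Finsupp.single 0 d) (1 : K)) ^ q
            * monomial (Finsupp.single 0 t + Finsupp.single 1 (d - t)) (1 : K)
            * (monomial (Finsupp.single 1 d) (1 : K)) ^ s' := by
        rw [monomial_pow, monomial_pow, monomial_mul, monomial_mul, hweq]
        simp
      have m1 : monomial (Finsupp.single 0 d) (1 : K) ∈ I j :=
        (hIeq j) ▸ Ideal.subset_span ⟨_, hx j, rfl⟩
      have m2 : monomial (Finsupp.single 0 t + Finsupp.single 1 (d - t)) (1 : K) ∈ I j :=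
        (hIeq j) ▸ Ideal.subset_span ⟨_, hj, rfl⟩
      have m3 : monomial (Finsupp.single 1 d) (1 : K) ∈ I j :=
        (hIeq j) ▸ Ideal.subset_span ⟨_, hy j, rfl⟩
      have hIk : I j ^ q * I j * I j ^ s' = I j ^ k := by rw [← hks]; ring
      have hmem : monomial w (1 : K) ∈ I j ^ k := by
        rw [hm, ← hIk]
        exact Ideal.mul_mem_mul (Ideal.mul_mem_mul (Ideal.pow_mem_pow m1 q) m2)
          (Ideal.pow_mem_pow m3 s')
      exact ideal_le_sum (fun j => I j ^ k) j hmem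
  intro k hk
  apply le_antisymm
  · rw [hUnion, span_mon_pow, Ideal.span_le]
    rintro p ⟨w, hw, rfl⟩
    refine key k hk w (sumSet_deg ?_ k w hw)
    rintro v hv
    obtain ⟨j, hj⟩ := Set.mem_iUnion.mp hv
    exact hSdeg j v hj
  · exact ideal_sum_le fun j =>
      Ideal.pow_right_mono (ideal_le_sum I j) k
end

section
/- Let K be a field, let a be a positive integer, let r ≥ 1, and for j = 1,…,r let I_j ⊂ K[x,y] be the monomial ideal whose minimal monomial generators are {x^{ia} y^{b_{i,j}} : i = s_j, …, t_j}, where 0 ≤ s_j ≤ t_j and b_{i,j} > b_{i+1,j} ≥ 0 for s_j ≤ i < t_j. Then μ(I_1 ⋯ I_r) = Σ_{j=1}^r μ(I_j) − (r − 1); in particular, if I ⊂ K[x,y] is a monomial ideal with minimal monomial generators {x^{ia} y^{b_i} : i = s,…,t} (with b_i strictly decreasing in i), then μ(I^k) = k(t − s) + 1 for all k ≥ 1. -/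
/-!
Call an ideal of `K[x,y]` generated by `x^(ia) y^(b i)`, `s ≤ i ≤ t`, with `b` strictly
decreasing, a staircase. The product of two staircases is a staircase on `[s + s', t + t']`:
as all `x`-exponents are multiples of `a`, the products `x^((i+j)a) y^(b i + c j)` with
`i + j = n` are multiples of the one with the least `y`-exponent `min_{i+j=n} (b i + c j)`, and
this minimum strictly decreases in `n`.

A staircase needs exactly `t - s + 1` generators, since the exponents `A` of its generators form
an antichain: taking the coefficients at `A` maps the ideal onto `K^A`, and on the ideal this map
sends `g * f` to `g(0) •` (the image of `f`), so the images of any generating set span `K^A`.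
-/

open MvPolynomial

theorem mu_eq_card_of_span_eq_of_le {R : Type*} [CommRing R] {I : Ideal R} {F₀ : Finset R}
    (h₀ : Ideal.span (F₀ : Set R) = I)
    (hmin : ∀ F : Finset R, Ideal.span (F : Set R) = I → F₀.card ≤ F.card) :
    mu I = F₀.card :=
  le_antisymm (Nat.sInf_le ⟨F₀, rfl, h₀⟩)
    (le_csInf ⟨_, F₀, rfl, h₀⟩ fun _ ⟨F, hF, hspan⟩ => hF ▸ hmin F hspan)

section MonomialIdeal

variable {σ : Type*}

theorem coeff_mul_of_minimal_of_mem_span_monomial {R : Type*} [CommSemiring R]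
    {A : Set (σ →₀ ℕ)} {d : σ →₀ ℕ} (hd : ∀ e ∈ A, e ≤ d → e = d)
    {f : MvPolynomial σ R} (hf : f ∈ Ideal.span ((fun e => monomial e (1 : R)) '' A))
    (g : MvPolynomial σ R) :
    coeff d (g * f) = coeff 0 g * coeff d f := by
  classical
  rw [coeff_mul, Finset.sum_eq_single (0, d) _ (by simp)]
  rintro ⟨ν, μ⟩ hνμ hne
  rw [Finset.HasAntidiagonal.mem_antidiagonal] at hνμ
  by_cases hμ : coeff μ f = 0
  · rw [hμ, mul_zero]
  obtain ⟨e, he, heμ⟩ := mem_ideal_span_monomial_image.mp hf μ (mem_support_iff.mpr hμ)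
  have hμd : μ ≤ d := hνμ ▸ le_add_self
  have hμ_eq : μ = d := le_antisymm hμd (hd e he (heμ.trans hμd) ▸ heμ)
  subst hμ_eq
  exact absurd (by simpa using hνμ) hne

variable {K : Type*} [Field K]

theorem card_le_of_span_eq_span_monomial {A : Finset (σ →₀ ℕ)}
    (hA : IsAntichain (· ≤ ·) (A : Set (σ →₀ ℕ))) {F : Finset (MvPolynomial σ K)}
    (hF : Ideal.span (F : Set (MvPolynomial σ K))
      = Ideal.span ((fun e => monomial e (1 : K)) '' (A : Set (σ →₀ ℕ)))) :
    A.card ≤ F.card := by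
  classical
  let coeffs : MvPolynomial σ K →ₗ[K] (A → K) := LinearMap.pi fun d => lcoeff K d
  have hcoeffs : ∀ f ∈ Ideal.span (F : Set (MvPolynomial σ K)),
      coeffs f ∈ Submodule.span K (coeffs '' F) := by
    intro f hf
    induction hf using Submodule.span_induction with
    | mem f hf => exact Submodule.subset_span ⟨f, hf, rfl⟩
    | zero => simp
    | add f g _ _ hf hg => rw [map_add]; exact add_mem hf hg
    | smul g f hf hf' =>
      have hmul : coeffs (g • f) = coeff 0 g • coeffs f := by
        ext d
        exact coeff_mul_of_minimal_of_mem_span_monomial (fun e he hed => hA.eq he d.2 hed)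
          (hF ▸ hf) g
      rw [hmul]
      exact Submodule.smul_mem _ _ hf'
  have htop : Submodule.span K (coeffs '' F) = ⊤ := by
    rw [eq_top_iff, ← (Pi.basisFun K A).span_eq, Submodule.span_le]
    rintro _ ⟨d, rfl⟩
    have hbasis : coeffs (monomial d 1) = Pi.basisFun K A d := by
      ext d'
      simp only [coeffs, LinearMap.pi_apply, lcoeff_apply, coeff_monomial, Pi.basisFun_apply,
        Pi.single_apply, Subtype.ext_iff, eq_comm]
    rw [← hbasis]
    exact hcoeffs _ (hF ▸ Ideal.subset_span ⟨d, d.2, rfl⟩)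
  calc A.card = Module.finrank K (Submodule.span K (coeffs '' F)) := by
        rw [htop, finrank_top, Module.finrank_fintype_fun_eq_card, Fintype.card_coe]
    _ ≤ (F.image coeffs).card := by
      have h := finrank_span_finset_le_card (R := K) (F.image coeffs)
      rwa [Finset.coe_image] at h
    _ ≤ F.card := Finset.card_image_le

theorem mu_span_monomial_of_isAntichain {A : Finset (σ →₀ ℕ)}
    (hA : IsAntichain (· ≤ ·) (A : Set (σ →₀ ℕ))) :
    mu (Ideal.span ((fun e => monomial e (1 : K)) '' (A : Set (σ →₀ ℕ)))) = A.card := by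
  classical
  have hcard : (A.image fun e => monomial e (1 : K)).card = A.card :=
    Finset.card_image_of_injective _ (monomial_left_injective one_ne_zero)
  rw [← hcard]
  refine mu_eq_card_of_span_eq_of_le (by rw [Finset.coe_image]) fun F hF => ?_
  rw [hcard]
  exact card_le_of_span_eq_span_monomial hA hF

end MonomialIdeal

theorem strictAntiOn_Icc_of_add_one_lt {β : Type*} [Preorder β] {f : ℕ → β} {s t : ℕ}
    (hf : ∀ i, s ≤ i → i < t → f (i + 1) < f i) : StrictAntiOn f (Set.Icc s t) :=
  strictAntiOn_of_succ_lt Set.ordConnected_Icc fun i _ hi hi' => by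
    rw [Order.succ_eq_add_one] at hi' ⊢
    exact hf i hi.1 (Nat.lt_of_succ_le hi'.2)

section MinPlusConv

variable (b c : ℕ → ℕ) (s t s' t' : ℕ)

noncomputable def minPlusConv (n : ℕ) : ℕ :=
  sInf {m | ∃ i ∈ Set.Icc s t, ∃ j ∈ Set.Icc s' t', i + j = n ∧ b i + c j = m}

variable {b c s t s' t'}

theorem minPlusConv_le {i j : ℕ} (hi : i ∈ Set.Icc s t) (hj : j ∈ Set.Icc s' t') :
    minPlusConv b c s t s' t' (i + j) ≤ b i + c j :=
  Nat.sInf_le ⟨i, hi, j, hj, rfl, rfl⟩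

theorem exists_eq_minPlusConv (hst : s ≤ t) (hst' : s' ≤ t') {n : ℕ}
    (hn : n ∈ Set.Icc (s + s') (t + t')) :
    ∃ i ∈ Set.Icc s t, ∃ j ∈ Set.Icc s' t', i + j = n ∧
      b i + c j = minPlusConv b c s t s' t' n := by
  obtain ⟨hn₁, hn₂⟩ := hn
  have hne :
      {m | ∃ i ∈ Set.Icc s t, ∃ j ∈ Set.Icc s' t', i + j = n ∧ b i + c j = m}.Nonempty := by
    refine ⟨_, min t (n - s'), ⟨?_, ?_⟩, n - min t (n - s'), ⟨?_, ?_⟩, ?_, rfl⟩ <;> omega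
  exact Nat.sInf_mem hne

/-- At a minimising split `(i, j)` of `n`, one of `i`, `j` can still be raised by one, and
that decreases the sum. -/
theorem strictAntiOn_minPlusConv (hst : s ≤ t) (hst' : s' ≤ t')
    (hb : StrictAntiOn b (Set.Icc s t)) (hc : StrictAntiOn c (Set.Icc s' t')) :
    StrictAntiOn (minPlusConv b c s t s' t') (Set.Icc (s + s') (t + t')) := by
  refine strictAntiOn_Icc_of_add_one_lt fun n hn₁ hn₂ => ?_
  obtain ⟨i, hi, j, hj, rfl, hmin⟩ :=
    exists_eq_minPlusConv (b := b) (c := c) hst hst' ⟨hn₁, hn₂.le⟩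
  rw [← hmin]
  rcases lt_or_ge i t with hi_lt | hi_ge
  · have hi' : i + 1 ∈ Set.Icc s t := ⟨hi.1.trans i.le_succ, hi_lt⟩
    calc minPlusConv b c s t s' t' (i + j + 1)
        = minPlusConv b c s t s' t' (i + 1 + j) := by rw [Nat.add_right_comm]
      _ ≤ b (i + 1) + c j := minPlusConv_le hi' hj
      _ < b i + c j := Nat.add_lt_add_right (hb hi hi' (Nat.lt_succ_self i)) _
  · have hj' : j + 1 ∈ Set.Icc s' t' := ⟨hj.1.trans j.le_succ, by omega⟩
    calc minPlusConv b c s t s' t' (i + j + 1)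
        ≤ b i + c (j + 1) := minPlusConv_le hi hj'
      _ < b i + c j := Nat.add_lt_add_left (hc hj hj' (Nat.lt_succ_self j)) _

end MinPlusConv

section Staircase

variable {R : Type*} [CommSemiring R]

def IsStaircase (a : ℕ) (J : Ideal (MvPolynomial (Fin 2) R)) (s t : ℕ) : Prop :=
  ∃ b : ℕ → ℕ, StrictAntiOn b (Set.Icc s t) ∧
    J = Ideal.span ((fun i => (X 0 : MvPolynomial (Fin 2) R) ^ (i * a) * X 1 ^ b i) '' Set.Icc s t)

theorem isStaircase_one (a : ℕ) : IsStaircase a (1 : Ideal (MvPolynomial (Fin 2) R)) 0 0 :=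
  ⟨fun _ => 0, by simp, by simp⟩

namespace IsStaircase

variable {a : ℕ} {J J' : Ideal (MvPolynomial (Fin 2) R)} {s t s' t' : ℕ}

theorem mul (hst : s ≤ t) (hst' : s' ≤ t') (h : IsStaircase a J s t)
    (h' : IsStaircase a J' s' t') : IsStaircase a (J * J') (s + s') (t + t') := by
  obtain ⟨b, hb, rfl⟩ := h
  obtain ⟨c, hc, rfl⟩ := h'
  refine ⟨minPlusConv b c s t s' t', strictAntiOn_minPlusConv hst hst' hb hc, ?_⟩
  rw [Ideal.span_mul_span']
  apply le_antisymm
  · rw [Ideal.span_le]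
    rintro _ ⟨_, ⟨i, hi, rfl⟩, _, ⟨j, hj, rfl⟩, rfl⟩
    dsimp only
    set m := minPlusConv b c s t s' t' (i + j)
    have hm : m ≤ b i + c j := minPlusConv_le hi hj
    have hfactor :
        (X 0 : MvPolynomial (Fin 2) R) ^ (i * a) * X 1 ^ b i * (X 0 ^ (j * a) * X 1 ^ c j)
          = X 0 ^ ((i + j) * a) * X 1 ^ m * X 1 ^ (b i + c j - m) := by
      rw [mul_assoc _ (X 1 ^ m), ← pow_add, Nat.add_sub_cancel' hm]
      ring
    rw [hfactor]
    exact Ideal.mul_mem_right _ _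
      (Ideal.subset_span ⟨i + j, ⟨add_le_add hi.1 hj.1, add_le_add hi.2 hj.2⟩, rfl⟩)
  · rw [Ideal.span_le]
    rintro _ ⟨n, hn, rfl⟩
    obtain ⟨i, hi, j, hj, rfl, hmin⟩ := exists_eq_minPlusConv (b := b) (c := c) hst hst' hn
    refine Ideal.subset_span ⟨_, ⟨i, hi, rfl⟩, _, ⟨j, hj, rfl⟩, ?_⟩
    dsimp only
    rw [← hmin]
    ring

theorem pow (hst : s ≤ t) (h : IsStaircase a J s t) (k : ℕ) :
    IsStaircase a (J ^ k) (k * s) (k * t) := by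
  induction k with
  | zero => simpa using isStaircase_one a
  | succ k ih =>
    rw [pow_succ, Nat.succ_mul, Nat.succ_mul]
    exact ih.mul (Nat.mul_le_mul_left k hst) hst h

end IsStaircase

theorem isStaircase_prod {a : ℕ} {ι : Type*} {J : ι → Ideal (MvPolynomial (Fin 2) R)}
    {s t : ι → ℕ} (hst : ∀ j, s j ≤ t j) (h : ∀ j, IsStaircase a (J j) (s j) (t j))
    (u : Finset ι) : IsStaircase a (∏ j ∈ u, J j) (∑ j ∈ u, s j) (∑ j ∈ u, t j) := by
  induction u using Finset.cons_induction with
  | empty => simpa using isStaircase_one a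
  | cons j u hj ih =>
    rw [Finset.prod_cons, Finset.sum_cons, Finset.sum_cons]
    exact (h j).mul (hst j) (Finset.sum_le_sum fun j _ => hst j) ih

end Staircase

theorem IsStaircase.mu_eq {K : Type*} [Field K] {a : ℕ} (ha : 0 < a)
    {J : Ideal (MvPolynomial (Fin 2) K)} {s t : ℕ} (h : IsStaircase a J s t) :
    mu J = t + 1 - s := by
  obtain ⟨b, hb, rfl⟩ := h
  let e : ℕ → Fin 2 →₀ ℕ := fun i => Finsupp.single 0 (i * a) + Finsupp.single 1 (b i)
  have he : ∀ i ∈ Set.Icc s t, ∀ j ∈ Set.Icc s t, e i ≤ e j → i = j := by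
    intro i hi j hj hle
    have hx : i * a ≤ j * a := by simpa [e] using hle 0
    have hy : b i ≤ b j := by simpa [e] using hle 1
    exact le_antisymm (Nat.le_of_mul_le_mul_right hx ha) ((hb.le_iff_ge hi hj).1 hy)
  have hgen : (fun i => (X 0 : MvPolynomial (Fin 2) K) ^ (i * a) * X 1 ^ b i) '' Set.Icc s t
      = (fun d => monomial d (1 : K)) '' ↑((Finset.Icc s t).image e) := by
    rw [Finset.coe_image, Finset.coe_Icc, Set.image_image]
    exact Set.image_congr fun i _ => by simp only [e, X_pow_eq_monomial, monomial_mul, one_mul]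
  rw [hgen, mu_span_monomial_of_isAntichain, Finset.card_image_of_injOn, Nat.card_Icc]
  · intro i hi j hj hij
    rw [Finset.coe_Icc] at hi hj
    exact he i hi j hj hij.le
  · rw [Finset.coe_image, Finset.coe_Icc]
    rintro _ ⟨i, hi, rfl⟩ _ ⟨j, hj, rfl⟩ hne hle
    exact hne (congrArg e (he i hi j hj hle))

/-- Theorem 4.4 and Corollary 4.5: let `a > 0` and for `j = 1,…,r` let `I_j ⊂ K[x,y]` be the
monomial ideal minimally generated by `{x^{ia} y^{b_{i,j}} : i = s_j,…,t_j}`, where `b_{i,j}`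
is strictly decreasing in `i`. Then `μ(I₁ ⋯ I_r) = Σ μ(I_j) - (r-1)`; in particular, for a
single such ideal `L` one has `μ(L^k) = k(t-s) + 1` for all `k ≥ 1`. -/
theorem numGen_prod_of_arithmetic_x_exponents {K : Type*} [Field K]
    (a : ℕ) (ha : 0 < a) {r : ℕ} (hr : 0 < r)
    (s t : Fin r → ℕ) (b : ℕ → Fin r → ℕ)
    (hst : ∀ j, s j ≤ t j)
    (hb : ∀ j, ∀ i, s j ≤ i → i < t j → b (i + 1) j < b i j)
    (I : Fin r → Ideal (MvPolynomial (Fin 2) K))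
    (hI : ∀ j, I j = Ideal.span
      ((fun i => (X 0 : MvPolynomial (Fin 2) K) ^ (i * a) * X 1 ^ (b i j)) '' Set.Icc (s j) (t j))) :
    mu (∏ j, I j) = (∑ j, mu (I j)) - (r - 1) ∧
    (∀ (L : Ideal (MvPolynomial (Fin 2) K)) (s' t' : ℕ) (c : ℕ → ℕ),
      s' ≤ t' → (∀ i, s' ≤ i → i < t' → c (i + 1) < c i) →
      L = Ideal.span
        ((fun i => (X 0 : MvPolynomial (Fin 2) K) ^ (i * a) * X 1 ^ (c i)) '' Set.Icc s' t') →
      ∀ k : ℕ, 1 ≤ k → mu (L ^ k) = k * (t' - s') + 1) := by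
  have hstair : ∀ j, IsStaircase a (I j) (s j) (t j) := fun j =>
    ⟨fun i => b i j, strictAntiOn_Icc_of_add_one_lt (hb j), hI j⟩
  refine ⟨?_, fun L s' t' c hst' hc hL k _ => ?_⟩
  · have hsum_le : ∑ j, s j ≤ ∑ j, t j := Finset.sum_le_sum fun j _ => hst j
    have hsum_mu : ∑ j, mu (I j) = ∑ j, t j + r - ∑ j, s j := by
      rw [Finset.sum_congr rfl fun j _ => (hstair j).mu_eq ha,
        Finset.sum_tsub_distrib _ fun j _ => le_add_right (hst j),
        Finset.sum_add_distrib, Finset.sum_const, Finset.card_univ, Fintype.card_fin, smul_eq_mul,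
        mul_one]
    rw [(isStaircase_prod hst hstair Finset.univ).mu_eq ha, hsum_mu]
    omega
  · rw [(IsStaircase.pow hst' ⟨c, strictAntiOn_Icc_of_add_one_lt hc, hL⟩ k).mu_eq ha,
      Nat.mul_sub]
    have := Nat.mul_le_mul_left k hst'
    omega
end
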